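/- arXiv:2409.05131 — 6 statements merged into one kernel-verified Lean document; each statement's English description precedes it below -/
import Mathlib

section
/- Let m > 0 be the particle mass and β > 0 the inverse temperature. Suppose the differential cross-section σ satisfies: there exist c > -2 and B' > 0 such that σ(g, Θ) ≤ B' · g^(−3) · (sin Θ)^c for all g > 0 and Θ ∈ (0, π). Then for every δ with 0 < δ < 1 there exists a constant ν₀ > 0 such that the collision frequency satisfies ν(p) ≤ ν₀ · (E(p)/m)^(−(δ+1)/2) for all p ∈ ℝ³; in particular ν is bounded above by ν₀. -/
open MeasureTheory Real RealInnerProductSpace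

/-- Relativistic energy `E(p) = √(‖p‖² + m²)`. -/
noncomputable def energy (m : ℝ) (p : EuclideanSpace ℝ (Fin 3)) : ℝ :=
  Real.sqrt (‖p‖ ^ 2 + m ^ 2)

/-- Relative momentum `g(p,q) = √(2(E(p)E(q) − ⟨p,q⟩ − m²))`. -/
noncomputable def relMom (m : ℝ) (p q : EuclideanSpace ℝ (Fin 3)) : ℝ :=
  Real.sqrt (2 * (energy m p * energy m q - ⟪p, q⟫ - m ^ 2))

/-- Total cross-section `σ_T(g) = 2π ∫_0^π σ(g,Θ) sin Θ dΘ`. -/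
noncomputable def totalXsec (σ : ℝ → ℝ → ℝ) (g : ℝ) : ℝ :=
  2 * Real.pi * ∫ Θ in (0:ℝ)..Real.pi, σ g Θ * Real.sin Θ

/-- Collision frequency
`ν(p) = E(p)⁻¹ ∫ (e^{−βE(q)}/E(q)) g(p,q) √(g(p,q)² + 4m²) σ_T(g(p,q)) dq`. -/
noncomputable def collFreq (m β : ℝ) (σ : ℝ → ℝ → ℝ) (p : EuclideanSpace ℝ (Fin 3)) : ℝ :=
  (energy m p)⁻¹ * ∫ q : EuclideanSpace ℝ (Fin 3),
    (Real.exp (-β * energy m q) / energy m q) * relMom m p q *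
      Real.sqrt ((relMom m p q) ^ 2 + 4 * m ^ 2) * totalXsec σ (relMom m p q)

open Metric
section aux
variable {m : ℝ} (hm : 0 < m) (p q : EuclideanSpace ℝ (Fin 3))

lemma energy_nonneg : 0 ≤ energy m p := Real.sqrt_nonneg _

lemma energy_sq : (energy m p) ^ 2 = ‖p‖ ^ 2 + m ^ 2 :=
  Real.sq_sqrt (by positivity)

include hm

lemma m_le_energy : m ≤ energy m p :=
  calc m = Real.sqrt (m ^ 2) := (Real.sqrt_sq hm.le).symm
    _ ≤ energy m p := Real.sqrt_le_sqrt (by nlinarith [sq_nonneg ‖p‖])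

lemma energy_pos : 0 < energy m p := lt_of_lt_of_le hm (m_le_energy hm p)

lemma norm_le_energy : ‖p‖ ≤ energy m p :=
  calc ‖p‖ = Real.sqrt (‖p‖ ^ 2) := (Real.sqrt_sq (norm_nonneg p)).symm
    _ ≤ energy m p := Real.sqrt_le_sqrt (by nlinarith)

lemma energy_le_add : energy m p ≤ m + ‖p‖ := by
  rw [energy, show m + ‖p‖ = Real.sqrt ((m + ‖p‖) ^ 2) from
    (Real.sqrt_sq (by positivity)).symm]
  exact Real.sqrt_le_sqrt (by nlinarith [norm_nonneg p, hm.le])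

lemma energy_mul_key : m ^ 2 + ⟪p, q⟫ ≤ energy m p * energy m q := by
  have hcs : ⟪p, q⟫ ≤ ‖p‖ * ‖q‖ := real_inner_le_norm p q
  have h1 : (m ^ 2 + ‖p‖ * ‖q‖) ^ 2 ≤ (energy m p * energy m q) ^ 2 := by
    rw [mul_pow, energy_sq, energy_sq]
    nlinarith [sq_nonneg (‖p‖ - ‖q‖), norm_nonneg p, norm_nonneg q]
  have h2 : m ^ 2 + ‖p‖ * ‖q‖ ≤ energy m p * energy m q := by
    have hb : 0 ≤ energy m p * energy m q :=
      mul_nonneg (energy_nonneg p) (energy_nonneg q)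
    have ha : 0 ≤ m ^ 2 + ‖p‖ * ‖q‖ := by positivity
    nlinarith
  linarith

lemma relMom_arg_nonneg : 0 ≤ 2 * (energy m p * energy m q - ⟪p, q⟫ - m ^ 2) := by
  have := energy_mul_key hm p q; linarith

lemma relMom_nonneg : 0 ≤ relMom m p q := Real.sqrt_nonneg _

lemma relMom_sq : (relMom m p q) ^ 2 = 2 * (energy m p * energy m q - ⟪p, q⟫ - m ^ 2) :=
  Real.sq_sqrt (relMom_arg_nonneg hm p q)

lemma relMom_sq_le : (relMom m p q) ^ 2 ≤ 4 * (energy m p * energy m q) := by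
  rw [relMom_sq hm p q]
  have hcs : -(‖p‖ * ‖q‖) ≤ ⟪p, q⟫ := by
    have := real_inner_le_norm p (-q)
    simpa [inner_neg_right] using neg_le_neg this
  have h1 : ‖p‖ * ‖q‖ ≤ energy m p * energy m q :=
    mul_le_mul (norm_le_energy hm p) (norm_le_energy hm q) (norm_nonneg q)
      (energy_nonneg p)
  nlinarith [sq_nonneg m]

lemma relMom_sq_add_le : (relMom m p q) ^ 2 + 4 * m ^ 2 ≤ 8 * (energy m p * energy m q) := by
  have h1 := relMom_sq_le hm p q
  have h2 : m * m ≤ energy m p * energy m q :=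
    mul_le_mul (m_le_energy hm p) (m_le_energy hm q) hm.le (energy_nonneg p)
  nlinarith

lemma relMom_sq_lower :
    m ^ 2 * ‖p - q‖ ^ 2 ≤ 2 * (energy m p * energy m q) * (relMom m p q) ^ 2 := by
  set Ep := energy m p
  set Eq := energy m q
  set t : ℝ := ⟪p, q⟫
  have hp2 : Ep ^ 2 = ‖p‖ ^ 2 + m ^ 2 := energy_sq p
  have hq2 : Eq ^ 2 = ‖q‖ ^ 2 + m ^ 2 := energy_sq q
  have hcs : t * t ≤ ‖p‖ * ‖p‖ * (‖q‖ * ‖q‖) := by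
    have h := real_inner_mul_inner_self_le p q
    rw [real_inner_self_eq_norm_mul_norm, real_inner_self_eq_norm_mul_norm] at h
    exact h
  have hd : ‖p - q‖ ^ 2 = ‖p‖ ^ 2 - 2 * t + ‖q‖ ^ 2 := by
    rw [norm_sub_sq_real]
  have hg2 : (relMom m p q) ^ 2 = 2 * (Ep * Eq - t - m ^ 2) := relMom_sq hm p q
  have hmle : m * m ≤ Ep * Eq :=
    mul_le_mul (m_le_energy hm p) (m_le_energy hm q) hm.le (energy_nonneg p)
  have htle : t ≤ Ep * Eq := by
    have h1 : t ≤ ‖p‖ * ‖q‖ := real_inner_le_norm p q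
    have h2 : ‖p‖ * ‖q‖ ≤ Ep * Eq :=
      mul_le_mul (norm_le_energy hm p) (norm_le_energy hm q) (norm_nonneg q)
        (energy_nonneg p)
    linarith
  have h4 : Ep * Eq + m ^ 2 + t ≤ 4 * (Ep * Eq) := by nlinarith
  have hfact : (relMom m p q) ^ 2 * (Ep * Eq + m ^ 2 + t)
      = 2 * ((Ep * Eq) ^ 2 - (m ^ 2 + t) ^ 2) := by rw [hg2]; ring
  have hEE2 : (Ep * Eq) ^ 2 = (‖p‖ ^ 2 + m ^ 2) * (‖q‖ ^ 2 + m ^ 2) := by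
    rw [mul_pow, hp2, hq2]
  have hlow : 2 * m ^ 2 * ‖p - q‖ ^ 2 ≤ (relMom m p q) ^ 2 * (Ep * Eq + m ^ 2 + t) := by
    rw [hfact, hEE2, hd]; nlinarith
  have hmul : (relMom m p q) ^ 2 * (Ep * Eq + m ^ 2 + t)
      ≤ (relMom m p q) ^ 2 * (4 * (Ep * Eq)) :=
    mul_le_mul_of_nonneg_left h4 (sq_nonneg _)
  linarith

lemma relMom_pos (hne : p ≠ q) : 0 < relMom m p q := by
  have h1 := relMom_sq_lower hm p q
  rw [relMom_sq hm p q] at h1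
  have h2 : 0 < ‖p - q‖ ^ 2 := pow_pos (norm_pos_iff.mpr (sub_ne_zero.mpr hne)) 2
  have hEE : 0 < energy m p * energy m q :=
    mul_pos (energy_pos hm p) (energy_pos hm q)
  rw [relMom]
  apply Real.sqrt_pos.mpr
  by_contra h
  push_neg at h
  have h5 : 2 * (energy m p * energy m q) *
      (2 * (energy m p * energy m q - ⟪p, q⟫ - m ^ 2)) ≤ 0 :=
    mul_nonpos_of_nonneg_of_nonpos (by positivity) h
  nlinarith [mul_pos (pow_pos hm 2) h2]

end aux
lemma totalXsec_nonneg (σ : ℝ → ℝ → ℝ) (hσ : ∀ g Θ, 0 ≤ σ g Θ) (g : ℝ) :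
    0 ≤ totalXsec σ g := by
  unfold totalXsec
  apply mul_nonneg (by positivity)
  apply intervalIntegral.integral_nonneg_of_ae_restrict Real.pi_pos.le
  refine (ae_restrict_iff' measurableSet_Icc).mpr (ae_of_all _ fun Θ hΘ => ?_)
  exact mul_nonneg (hσ g Θ) (Real.sin_nonneg_of_nonneg_of_le_pi hΘ.1 hΘ.2)

lemma sin_rpow_le (u : ℝ) (hu : u ≤ 0) {Θ : ℝ} (hΘ : Θ ∈ Set.Ioo 0 Real.pi) :
    Real.sin Θ ^ u ≤ (2 / Real.pi) ^ u * (Θ ^ u + (Real.pi - Θ) ^ u) := by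
  have hpi := Real.pi_pos
  have h2pi : (0:ℝ) < 2 / Real.pi := by positivity
  rcases le_or_gt Θ (Real.pi / 2) with hle | hlt
  · have h1 : 2 / Real.pi * Θ ≤ Real.sin Θ := Real.mul_le_sin hΘ.1.le hle
    have h2 : Real.sin Θ ^ u ≤ (2 / Real.pi * Θ) ^ u :=
      Real.rpow_le_rpow_of_nonpos (mul_pos h2pi hΘ.1) h1 hu
    calc Real.sin Θ ^ u ≤ (2 / Real.pi * Θ) ^ u := h2
      _ = (2 / Real.pi) ^ u * Θ ^ u := Real.mul_rpow h2pi.le hΘ.1.le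
      _ ≤ (2 / Real.pi) ^ u * (Θ ^ u + (Real.pi - Θ) ^ u) := by
          have h4 : (0:ℝ) ≤ (Real.pi - Θ) ^ u := Real.rpow_nonneg (by linarith [hΘ.2]) u
          have h3 : (0:ℝ) ≤ (2 / Real.pi) ^ u := Real.rpow_nonneg h2pi.le u
          nlinarith
  · have hsub : Real.sin Θ = Real.sin (Real.pi - Θ) := (Real.sin_pi_sub Θ).symm
    have hpos : 0 < Real.pi - Θ := by linarith [hΘ.2]
    have hle2 : Real.pi - Θ ≤ Real.pi / 2 := by linarith
    have h1 : 2 / Real.pi * (Real.pi - Θ) ≤ Real.sin (Real.pi - Θ) :=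
      Real.mul_le_sin hpos.le hle2
    have h2 : Real.sin Θ ^ u ≤ (2 / Real.pi * (Real.pi - Θ)) ^ u := by
      rw [hsub]
      exact Real.rpow_le_rpow_of_nonpos (by positivity) h1 hu
    calc Real.sin Θ ^ u ≤ (2 / Real.pi * (Real.pi - Θ)) ^ u := h2
      _ = (2 / Real.pi) ^ u * (Real.pi - Θ) ^ u := Real.mul_rpow h2pi.le hpos.le
      _ ≤ (2 / Real.pi) ^ u * (Θ ^ u + (Real.pi - Θ) ^ u) := by
          have h4 : (0:ℝ) ≤ Θ ^ u := Real.rpow_nonneg hΘ.1.le u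
          have h3 : (0:ℝ) ≤ (2 / Real.pi) ^ u := Real.rpow_nonneg h2pi.le u
          nlinarith

lemma integral_sigma_sin_le (σ : ℝ → ℝ → ℝ) (hσ : ∀ g Θ, 0 ≤ σ g Θ) (g : ℝ)
    (D : ℝ → ℝ) (hD_int : IntegrableOn D (Set.Ioc 0 Real.pi))
    (hD0 : ∀ Θ ∈ Set.Ioc (0:ℝ) Real.pi, 0 ≤ D Θ)
    (hbound : ∀ Θ ∈ Set.Ioo (0:ℝ) Real.pi, σ g Θ * Real.sin Θ ≤ D Θ) :
    (∫ Θ in (0:ℝ)..Real.pi, σ g Θ * Real.sin Θ) ≤ ∫ Θ in Set.Ioc (0:ℝ) Real.pi, D Θ := by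
  rw [intervalIntegral.integral_of_le Real.pi_pos.le]
  refine integral_mono_of_nonneg ?_ hD_int ?_
  · refine (ae_restrict_iff' measurableSet_Ioc).mpr (ae_of_all _ fun Θ hΘ => ?_)
    exact mul_nonneg (hσ g Θ) (Real.sin_nonneg_of_nonneg_of_le_pi hΘ.1.le hΘ.2)
  · refine (ae_restrict_iff' measurableSet_Ioc).mpr (ae_of_all _ fun Θ hΘ => ?_)
    rcases eq_or_lt_of_le hΘ.2 with heq | hlt
    · have h0 : σ g Θ * Real.sin Θ = 0 := by rw [heq, Real.sin_pi, mul_zero]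
      show σ g Θ * Real.sin Θ ≤ D Θ
      rw [h0]; exact hD0 Θ hΘ
    · exact hbound Θ ⟨hΘ.1, hlt⟩

lemma exists_totalXsec_bound (σ : ℝ → ℝ → ℝ) (hσ : ∀ g Θ, 0 ≤ σ g Θ)
    (c B' : ℝ) (hc : -2 < c) (hB' : 0 < B')
    (hup : ∀ g Θ : ℝ, 0 < g → Θ ∈ Set.Ioo 0 Real.pi →
      σ g Θ ≤ B' * g ^ (-(3:ℝ)) * Real.sin Θ ^ c) :
    ∃ K : ℝ, 0 < K ∧ ∀ g : ℝ, 0 < g → totalXsec σ g ≤ K * (g ^ 3)⁻¹ := by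
  have hpi := Real.pi_pos
  have hu : (-1:ℝ) < c + 1 := by linarith
  have hg3 : ∀ g : ℝ, 0 < g → g ^ (-(3:ℝ)) = (g ^ 3)⁻¹ := fun g hg => by
    rw [Real.rpow_neg hg.le, ← Real.rpow_natCast g 3]; norm_num
  rcases le_or_gt 0 (c + 1) with hcase | hcase
  · refine ⟨2 * Real.pi ^ 2 * B', by positivity, fun g hg => ?_⟩
    have key : ∀ Θ ∈ Set.Ioo (0:ℝ) Real.pi,
        σ g Θ * Real.sin Θ ≤ B' * (g ^ 3)⁻¹ := by
      intro Θ hΘ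
      have hs : 0 < Real.sin Θ := Real.sin_pos_of_pos_of_lt_pi hΘ.1 hΘ.2
      have h1 : σ g Θ * Real.sin Θ ≤ B' * (g ^ 3)⁻¹ * (Real.sin Θ ^ c * Real.sin Θ) := by
        have := mul_le_mul_of_nonneg_right (hup g Θ hg hΘ) hs.le
        rw [hg3 g hg] at this
        linarith [this]
      have h2 : Real.sin Θ ^ c * Real.sin Θ = Real.sin Θ ^ (c + 1) :=
        (Real.rpow_add_one hs.ne' c).symm
      have h3 : Real.sin Θ ^ (c + 1) ≤ 1 :=
        Real.rpow_le_one hs.le (Real.sin_le_one Θ) hcase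
      calc σ g Θ * Real.sin Θ ≤ B' * (g ^ 3)⁻¹ * (Real.sin Θ ^ c * Real.sin Θ) := h1
        _ = B' * (g ^ 3)⁻¹ * Real.sin Θ ^ (c + 1) := by rw [h2]
        _ ≤ B' * (g ^ 3)⁻¹ * 1 := by
            apply mul_le_mul_of_nonneg_left h3 (by positivity)
        _ = B' * (g ^ 3)⁻¹ := mul_one _
    have hI := integral_sigma_sin_le σ hσ g (fun _ => B' * (g ^ 3)⁻¹)
      ((integrableOn_const_iff).mpr (Or.inr (by rw [Real.volume_Ioc]; exact ENNReal.ofReal_lt_top)))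
      (fun Θ _ => by positivity) key
    have hconst : (∫ _ in Set.Ioc (0:ℝ) Real.pi, B' * (g ^ 3)⁻¹)
        = Real.pi * (B' * (g ^ 3)⁻¹) := by
      rw [setIntegral_const, Real.volume_real_Ioc_of_le hpi.le, smul_eq_mul, sub_zero]
    rw [hconst] at hI
    unfold totalXsec
    calc 2 * Real.pi * (∫ Θ in (0:ℝ)..Real.pi, σ g Θ * Real.sin Θ)
        ≤ 2 * Real.pi * (Real.pi * (B' * (g ^ 3)⁻¹)) := by
          apply mul_le_mul_of_nonneg_left hI (by positivity)
      _ = 2 * Real.pi ^ 2 * B' * (g ^ 3)⁻¹ := by ring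
  · -- -1 < c+1 < 0
    set u := c + 1 with hu_def
    set A : ℝ := (2 / Real.pi) ^ u with hA_def
    have hA : 0 ≤ A := Real.rpow_nonneg (by positivity) u
    have hint : IntegrableOn (fun Θ : ℝ => Θ ^ u + (Real.pi - Θ) ^ u)
        (Set.Ioc 0 Real.pi) := by
      rw [← intervalIntegrable_iff_integrableOn_Ioc_of_le hpi.le]
      have h1 : IntervalIntegrable (fun Θ : ℝ => Θ ^ u) volume 0 Real.pi :=
        intervalIntegral.intervalIntegrable_rpow' hu
      have h2 : IntervalIntegrable (fun Θ : ℝ => (Real.pi - Θ) ^ u) volume 0 Real.pi := by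
        have := (intervalIntegral.intervalIntegrable_rpow' (a := 0) (b := Real.pi)
          hu).comp_sub_left Real.pi
        simpa using this.symm
      exact h1.add h2
    set S : ℝ := ∫ Θ in Set.Ioc (0:ℝ) Real.pi, (Θ ^ u + (Real.pi - Θ) ^ u) with hS_def
    have hS : 0 ≤ S := by
      apply setIntegral_nonneg measurableSet_Ioc
      intro Θ hΘ
      have : (0:ℝ) ≤ Θ ^ u := Real.rpow_nonneg hΘ.1.le u
      have h4 : (0:ℝ) ≤ (Real.pi - Θ) ^ u := Real.rpow_nonneg (by linarith [hΘ.2]) u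
      linarith
    refine ⟨2 * Real.pi * B' * A * S + 1, by positivity, fun g hg => ?_⟩
    have key : ∀ Θ ∈ Set.Ioo (0:ℝ) Real.pi,
        σ g Θ * Real.sin Θ ≤ B' * (g ^ 3)⁻¹ * A * (Θ ^ u + (Real.pi - Θ) ^ u) := by
      intro Θ hΘ
      have hs : 0 < Real.sin Θ := Real.sin_pos_of_pos_of_lt_pi hΘ.1 hΘ.2
      have h1 : σ g Θ * Real.sin Θ ≤ B' * (g ^ 3)⁻¹ * (Real.sin Θ ^ c * Real.sin Θ) := by
        have := mul_le_mul_of_nonneg_right (hup g Θ hg hΘ) hs.le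
        rw [hg3 g hg] at this
        linarith [this]
      have h2 : Real.sin Θ ^ c * Real.sin Θ = Real.sin Θ ^ u :=
        (Real.rpow_add_one hs.ne' c).symm
      have h3 : Real.sin Θ ^ u ≤ A * (Θ ^ u + (Real.pi - Θ) ^ u) :=
        sin_rpow_le u hcase.le hΘ
      calc σ g Θ * Real.sin Θ ≤ B' * (g ^ 3)⁻¹ * (Real.sin Θ ^ c * Real.sin Θ) := h1
        _ = B' * (g ^ 3)⁻¹ * Real.sin Θ ^ u := by rw [h2]
        _ ≤ B' * (g ^ 3)⁻¹ * (A * (Θ ^ u + (Real.pi - Θ) ^ u)) := by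
            apply mul_le_mul_of_nonneg_left h3 (by positivity)
        _ = B' * (g ^ 3)⁻¹ * A * (Θ ^ u + (Real.pi - Θ) ^ u) := by ring
    have hI := integral_sigma_sin_le σ hσ g
      (fun Θ => B' * (g ^ 3)⁻¹ * A * (Θ ^ u + (Real.pi - Θ) ^ u))
      (hint.const_mul _)
      (fun Θ hΘ => by
        have h5 : (0:ℝ) ≤ Θ ^ u := Real.rpow_nonneg hΘ.1.le u
        have h4 : (0:ℝ) ≤ (Real.pi - Θ) ^ u := Real.rpow_nonneg (by linarith [hΘ.2]) u
        positivity) key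
    have hconst : (∫ Θ in Set.Ioc (0:ℝ) Real.pi,
        B' * (g ^ 3)⁻¹ * A * (Θ ^ u + (Real.pi - Θ) ^ u))
        = B' * (g ^ 3)⁻¹ * A * S := by
      rw [hS_def, ← integral_const_mul]
    rw [hconst] at hI
    unfold totalXsec
    have hg3inv : (0:ℝ) ≤ (g ^ 3)⁻¹ := by positivity
    calc 2 * Real.pi * (∫ Θ in (0:ℝ)..Real.pi, σ g Θ * Real.sin Θ)
        ≤ 2 * Real.pi * (B' * (g ^ 3)⁻¹ * A * S) := by
          apply mul_le_mul_of_nonneg_left hI (by positivity)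
      _ = 2 * Real.pi * B' * A * S * (g ^ 3)⁻¹ := by ring
      _ ≤ (2 * Real.pi * B' * A * S + 1) * (g ^ 3)⁻¹ := by nlinarith


lemma exp_decay_bound {b : ℝ} (hb : 0 < b) : ∀ x : ℝ, 0 ≤ x →
    Real.exp (-b * x) ≤ ((min 1 (b/4))⁻¹) ^ 4 * (1 + x) ^ (-(4:ℝ)) := by
  intro x hx
  set a := min 1 (b/4) with ha_def
  have ha : 0 < a := lt_min one_pos (by positivity)
  have ha1 : a ≤ 1 := min_le_left _ _
  have hab : a ≤ b/4 := min_le_right _ _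
  have hkey : a * (1 + x) ≤ Real.exp (b/4 * x) := by
    have h1 : a * (1 + x) ≤ 1 + b/4 * x := by nlinarith
    have h2 : 1 + b/4 * x ≤ Real.exp (b/4 * x) := by
      have := Real.add_one_le_exp (b/4 * x); linarith
    linarith
  have hpow : (a * (1 + x)) ^ 4 ≤ Real.exp (b * x) := by
    calc (a * (1 + x)) ^ 4 ≤ (Real.exp (b/4 * x)) ^ 4 :=
          pow_le_pow_left₀ (by positivity) hkey 4
      _ = Real.exp (b * x) := by
          rw [← Real.exp_nat_mul]; ring_nf
  have h4 : (1 + x) ^ (-(4:ℝ)) = ((1 + x) ^ (4:ℕ))⁻¹ := by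
    rw [← Real.rpow_natCast (1 + x) 4, ← Real.rpow_neg (by positivity)]
    norm_num
  have hexp : Real.exp (-b * x) = (Real.exp (b * x))⁻¹ := by
    rw [← Real.exp_neg]; ring_nf
  rw [h4, hexp]
  have hinv : (Real.exp (b * x))⁻¹ ≤ ((a * (1 + x)) ^ 4)⁻¹ :=
    inv_anti₀ (by positivity) hpow
  calc (Real.exp (b * x))⁻¹ ≤ ((a * (1 + x)) ^ 4)⁻¹ := hinv
    _ = (a⁻¹) ^ 4 * ((1 + x) ^ (4:ℕ))⁻¹ := by
        rw [mul_pow, mul_inv, inv_pow]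
    _ = _ := by norm_num

lemma integrable_exp_neg_norm {b : ℝ} (hb : 0 < b) :
    Integrable (fun q : EuclideanSpace ℝ (Fin 3) => Real.exp (-b * ‖q‖)) := by
  have hdim : (Module.finrank ℝ (EuclideanSpace ℝ (Fin 3)) : ℝ) < 4 := by
    simp [finrank_euclideanSpace_fin]; norm_num
  refine ((integrable_one_add_norm (μ := volume) hdim).const_mul
    (((min 1 (b/4))⁻¹) ^ 4)).mono' ?_ (ae_of_all _ fun q => ?_)
  · exact (Continuous.aestronglyMeasurable (by fun_prop))
  · rw [Real.norm_eq_abs, abs_of_pos (Real.exp_pos _)]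
    exact exp_decay_bound hb ‖q‖ (norm_nonneg q)

lemma integrableOn_inv_norm_sq :
    IntegrableOn (fun u : EuclideanSpace ℝ (Fin 3) => (‖u‖ ^ 2)⁻¹) (ball 0 1) volume := by
  set f : EuclideanSpace ℝ (Fin 3) → ℝ := fun u => (‖u‖ ^ 2)⁻¹ with hf_def
  have hmeas : Measurable f := ((continuous_norm.pow 2).measurable).inv
  have hnonneg : ∀ u, 0 ≤ f u := fun u => by positivity
  set V := volume (ball (0 : EuclideanSpace ℝ (Fin 3)) 1) with hV_def
  have hV : V < ⊤ := measure_ball_lt_top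
  constructor
  · exact hmeas.aestronglyMeasurable.restrict
  · rw [hasFiniteIntegral_iff_ofReal (ae_of_all _ hnonneg)]
    rw [lintegral_eq_lintegral_meas_lt _ (ae_of_all _ hnonneg)
      hmeas.aemeasurable.restrict]
    have hsplit : Set.Ioi (0:ℝ) = Set.Ioc 0 1 ∪ Set.Ioi 1 :=
      (Set.Ioc_union_Ioi_eq_Ioi zero_le_one).symm
    rw [hsplit, lintegral_union measurableSet_Ioi (Set.Ioc_disjoint_Ioi le_rfl)]
    have hmu_le : ∀ t : ℝ, (volume.restrict (ball 0 1)) {a | t < f a} ≤ V := fun t =>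
      le_trans (measure_mono (Set.subset_univ _)) (by rw [Measure.restrict_apply_univ])
    have h1 : (∫⁻ t in Set.Ioc (0:ℝ) 1, (volume.restrict (ball 0 1)) {a | t < f a}) ≤ V := by
      calc (∫⁻ t in Set.Ioc (0:ℝ) 1, (volume.restrict (ball 0 1)) {a | t < f a})
          ≤ ∫⁻ _ in Set.Ioc (0:ℝ) 1, V := lintegral_mono fun t => hmu_le t
        _ = V * volume (Set.Ioc (0:ℝ) 1) := by rw [setLIntegral_const]
        _ = V := by rw [Real.volume_Ioc]; norm_num
    have h2 : (∫⁻ t in Set.Ioi (1:ℝ), (volume.restrict (ball 0 1)) {a | t < f a})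
        ≤ ∫⁻ t in Set.Ioi (1:ℝ), ENNReal.ofReal (t ^ (-(3:ℝ)/2)) * V := by
      refine setLIntegral_mono' measurableSet_Ioi fun t ht => ?_
      have ht1 : (1:ℝ) < t := ht
      have ht0 : (0:ℝ) < t := lt_trans one_pos ht1
      have hsub : {a | t < f a} ⊆ ball (0 : EuclideanSpace ℝ (Fin 3)) (Real.sqrt t⁻¹) := by
        intro a ha
        have haf : t < (‖a‖ ^ 2)⁻¹ := ha
        have hape : ‖a‖ ≠ 0 := by
          intro h0
          rw [h0] at haf
          norm_num at haf
          linarith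
        have hapos : 0 < ‖a‖ := (norm_nonneg a).lt_of_ne (Ne.symm hape)
        have hsq : ‖a‖ ^ 2 < t⁻¹ := by
          have h3 : 0 < ‖a‖ ^ 2 := by positivity
          have h5 : t * ‖a‖ ^ 2 < 1 := by
            have := mul_lt_mul_of_pos_right haf h3
            rwa [inv_mul_cancel₀ (ne_of_gt h3)] at this
          rw [inv_eq_one_div, lt_div_iff₀ ht0]
          linarith [h5]
        rw [mem_ball_zero_iff]
        calc ‖a‖ = Real.sqrt (‖a‖ ^ 2) := (Real.sqrt_sq (norm_nonneg a)).symm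
          _ < Real.sqrt t⁻¹ := Real.sqrt_lt_sqrt (by positivity) hsq
      calc (volume.restrict (ball 0 1)) {a | t < f a}
          ≤ volume (ball (0 : EuclideanSpace ℝ (Fin 3)) (Real.sqrt t⁻¹)) :=
            le_trans (Measure.restrict_le_self _) (measure_mono hsub)
        _ = ENNReal.ofReal ((Real.sqrt t⁻¹) ^ 3) * V := by
            rw [Measure.addHaar_ball _ _ (Real.sqrt_nonneg _)]
            congr 1
            simp [finrank_euclideanSpace_fin]
        _ = ENNReal.ofReal (t ^ (-(3:ℝ)/2)) * V := by
            congr 2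
            rw [Real.sqrt_eq_rpow, ← Real.rpow_natCast ((t⁻¹) ^ ((1:ℝ)/2)) 3,
              ← Real.rpow_mul (by positivity), ← Real.rpow_neg_one t,
              ← Real.rpow_mul ht0.le]
            norm_num
    have h3 : (∫⁻ t in Set.Ioi (1:ℝ), ENNReal.ofReal (t ^ (-(3:ℝ)/2)) * V) < ⊤ := by
      rw [lintegral_mul_const' V _ hV.ne]
      exact ENNReal.mul_lt_top
        ((integrableOn_Ioi_rpow_of_lt (by norm_num) one_pos).setLIntegral_lt_top) hV
    calc _ ≤ V + (∫⁻ t in Set.Ioi (1:ℝ), ENNReal.ofReal (t ^ (-(3:ℝ)/2)) * V) :=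
          add_le_add h1 h2
      _ < ⊤ := ENNReal.add_lt_top.mpr ⟨hV, h3⟩


/-- auxiliary kernel -/
noncomputable def hker (b : ℝ) (p q : EuclideanSpace ℝ (Fin 3)) : ℝ :=
  Real.exp (-b * ‖q‖) * (‖p - q‖ ^ 2)⁻¹



lemma hker_nonneg (b : ℝ) (p q : EuclideanSpace ℝ (Fin 3)) : 0 ≤ hker b p q := by
  unfold hker; positivity

lemma hker_measurable (b : ℝ) (p : EuclideanSpace ℝ (Fin 3)) :
    Measurable (hker b p) := by
  apply Measurable.mul
  · fun_prop
  · exact ((continuous_const.sub continuous_id).norm.pow 2).measurable.inv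

lemma indicator_ball_eq (p : EuclideanSpace ℝ (Fin 3)) (q : EuclideanSpace ℝ (Fin 3)) :
    Set.indicator (ball p 1) (fun q' => (‖p - q'‖ ^ 2)⁻¹) q
      = Set.indicator (ball (0:EuclideanSpace ℝ (Fin 3)) 1) (fun u => (‖u‖ ^ 2)⁻¹) (p - q) := by
  by_cases hq : q ∈ ball p 1
  · have h2 : p - q ∈ ball (0:EuclideanSpace ℝ (Fin 3)) 1 := by
      rw [mem_ball_zero_iff]
      rw [mem_ball, dist_eq_norm, ← norm_sub_rev] at hq
      exact hq
    rw [Set.indicator_of_mem hq, Set.indicator_of_mem h2]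
  · have h2 : p - q ∉ ball (0:EuclideanSpace ℝ (Fin 3)) 1 := by
      rw [mem_ball_zero_iff]
      rw [mem_ball, dist_eq_norm, ← norm_sub_rev] at hq
      exact hq
    rw [Set.indicator_of_notMem hq, Set.indicator_of_notMem h2]

lemma integrable_indicator_ball (p : EuclideanSpace ℝ (Fin 3)) :
    Integrable (Set.indicator (ball p 1) (fun q' => (‖p - q'‖ ^ 2)⁻¹)) := by
  have h0 : Integrable
      (Set.indicator (ball (0:EuclideanSpace ℝ (Fin 3)) 1) (fun u => (‖u‖ ^ 2)⁻¹)) :=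
    (integrable_indicator_iff measurableSet_ball).mpr integrableOn_inv_norm_sq
  have h1 := h0.comp_sub_left p
  refine h1.congr (ae_of_all _ fun q => ?_)
  exact (indicator_ball_eq p q).symm

lemma integral_indicator_ball (p : EuclideanSpace ℝ (Fin 3)) :
    ∫ q, Set.indicator (ball p 1) (fun q' => (‖p - q'‖ ^ 2)⁻¹) q
      = ∫ u in ball (0:EuclideanSpace ℝ (Fin 3)) 1, (‖u‖ ^ 2)⁻¹ := by
  rw [← integral_indicator measurableSet_ball]
  rw [show (∫ q, Set.indicator (ball p 1) (fun q' => (‖p - q'‖ ^ 2)⁻¹) q)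
    = ∫ q, Set.indicator (ball (0:EuclideanSpace ℝ (Fin 3)) 1) (fun u => (‖u‖ ^ 2)⁻¹) (p - q)
    from integral_congr_ae (ae_of_all _ fun q => indicator_ball_eq p q)]
  exact integral_sub_left_eq_self _ _ p

lemma integrable_hker {b : ℝ} (hb : 0 < b) (p : EuclideanSpace ℝ (Fin 3)) :
    Integrable (hker b p) := by
  rw [← integrableOn_univ, ← Set.union_compl_self (ball p 1)]
  apply IntegrableOn.union
  · refine Integrable.mono' ((integrable_indicator_iff measurableSet_ball).mp
      (integrable_indicator_ball p)) ((hker_measurable b p).aestronglyMeasurable.restrict)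
      (ae_of_all _ fun q => ?_)
    rw [Real.norm_eq_abs, abs_of_nonneg (hker_nonneg b p q)]
    unfold hker
    have h1 : Real.exp (-b * ‖q‖) ≤ 1 :=
      Real.exp_le_one_iff.mpr (by nlinarith [norm_nonneg q])
    calc Real.exp (-b * ‖q‖) * (‖p - q‖ ^ 2)⁻¹ ≤ 1 * (‖p - q‖ ^ 2)⁻¹ :=
          mul_le_mul_of_nonneg_right h1 (by positivity)
      _ = (‖p - q‖ ^ 2)⁻¹ := one_mul _
  · refine Integrable.mono' ((integrable_exp_neg_norm hb).integrableOn)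
      ((hker_measurable b p).aestronglyMeasurable.restrict) ?_
    refine (ae_restrict_iff' measurableSet_ball.compl).mpr (ae_of_all _ fun q hq => ?_)
    rw [Real.norm_eq_abs, abs_of_nonneg (hker_nonneg b p q)]
    unfold hker
    have h1 : (1:ℝ) ≤ ‖p - q‖ := by
      rw [Set.mem_compl_iff, mem_ball, dist_eq_norm, not_lt, ← norm_sub_rev] at hq
      exact hq
    have h2 : (‖p - q‖ ^ 2)⁻¹ ≤ 1 := by
      rw [← inv_one]
      apply inv_anti₀ one_pos
      nlinarith
    calc Real.exp (-b * ‖q‖) * (‖p - q‖ ^ 2)⁻¹ ≤ Real.exp (-b * ‖q‖) * 1 :=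
          mul_le_mul_of_nonneg_left h2 (Real.exp_pos _).le
      _ = Real.exp (-b * ‖q‖) := mul_one _

lemma integral_hker_le {b : ℝ} (hb : 0 < b) (p : EuclideanSpace ℝ (Fin 3)) :
    (∫ q, hker b p q)
      ≤ (∫ u in ball (0:EuclideanSpace ℝ (Fin 3)) 1, (‖u‖ ^ 2)⁻¹)
        + ∫ q : EuclideanSpace ℝ (Fin 3), Real.exp (-b * ‖q‖) := by
  have hG : Integrable (fun q : EuclideanSpace ℝ (Fin 3) =>
      Set.indicator (ball p 1) (fun q' => (‖p - q'‖ ^ 2)⁻¹) q + Real.exp (-b * ‖q‖)) :=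
    (integrable_indicator_ball p).add (integrable_exp_neg_norm hb)
  have hle : ∀ q, hker b p q ≤
      Set.indicator (ball p 1) (fun q' => (‖p - q'‖ ^ 2)⁻¹) q + Real.exp (-b * ‖q‖) := by
    intro q
    by_cases hq : q ∈ ball p 1
    · rw [Set.indicator_of_mem hq]
      have h1 : Real.exp (-b * ‖q‖) ≤ 1 :=
        Real.exp_le_one_iff.mpr (by nlinarith [norm_nonneg q])
      have h2 : hker b p q ≤ (‖p - q‖ ^ 2)⁻¹ := by
        unfold hker
        calc Real.exp (-b * ‖q‖) * (‖p - q‖ ^ 2)⁻¹ ≤ 1 * (‖p - q‖ ^ 2)⁻¹ :=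
              mul_le_mul_of_nonneg_right h1 (by positivity)
          _ = (‖p - q‖ ^ 2)⁻¹ := one_mul _
      linarith [Real.exp_pos (-b * ‖q‖)]
    · rw [Set.indicator_of_notMem hq]
      have h1 : (1:ℝ) ≤ ‖p - q‖ := by
        rw [mem_ball, dist_eq_norm, not_lt, ← norm_sub_rev] at hq
        exact hq
      have h2 : (‖p - q‖ ^ 2)⁻¹ ≤ 1 := by
        rw [← inv_one]
        apply inv_anti₀ one_pos
        nlinarith
      have h3 : hker b p q ≤ Real.exp (-b * ‖q‖) := by
        unfold hker
        calc Real.exp (-b * ‖q‖) * (‖p - q‖ ^ 2)⁻¹ ≤ Real.exp (-b * ‖q‖) * 1 :=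
              mul_le_mul_of_nonneg_left h2 (Real.exp_pos _).le
          _ = _ := mul_one _
      linarith
  calc (∫ q, hker b p q) ≤ ∫ q : EuclideanSpace ℝ (Fin 3),
        (Set.indicator (ball p 1) (fun q' => (‖p - q'‖ ^ 2)⁻¹) q + Real.exp (-b * ‖q‖)) :=
        integral_mono_of_nonneg (ae_of_all _ (hker_nonneg b p)) hG (ae_of_all _ hle)
    _ = _ := by
        rw [integral_add (integrable_indicator_ball p) (integrable_exp_neg_norm hb),
          integral_indicator_ball p]

lemma rpow_add_le_two_rpow {a c s : ℝ} (ha : 0 ≤ a) (hc : 0 ≤ c) (hs : 0 ≤ s) :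
    (a + c) ^ s ≤ 2 ^ s * (a ^ s + c ^ s) := by
  rcases le_total a c with h | h
  · calc (a + c) ^ s ≤ (2 * c) ^ s :=
          Real.rpow_le_rpow (by linarith) (by linarith) hs
      _ = 2 ^ s * c ^ s := Real.mul_rpow (by norm_num) hc
      _ ≤ 2 ^ s * (a ^ s + c ^ s) := by
          have h1 : (0:ℝ) ≤ a ^ s := Real.rpow_nonneg ha s
          have h2 : (0:ℝ) ≤ (2:ℝ) ^ s := Real.rpow_nonneg (by norm_num) s
          nlinarith
  · calc (a + c) ^ s ≤ (2 * a) ^ s :=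
          Real.rpow_le_rpow (by linarith) (by linarith) hs
      _ = 2 ^ s * a ^ s := Real.mul_rpow (by norm_num) ha
      _ ≤ 2 ^ s * (a ^ s + c ^ s) := by
          have h1 : (0:ℝ) ≤ c ^ s := Real.rpow_nonneg hc s
          have h2 : (0:ℝ) ≤ (2:ℝ) ^ s := Real.rpow_nonneg (by norm_num) s
          nlinarith

lemma rpow_mul_inv_sq_le {s : ℝ} (hs0 : 0 ≤ s) (hs2 : s ≤ 2) {y : ℝ} (hy : 0 ≤ y) :
    y ^ s * (y ^ 2)⁻¹ ≤ 1 + (y ^ 2)⁻¹ := by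
  rcases eq_or_lt_of_le hy with h0 | hy0
  · rw [← h0]
    norm_num
  rcases le_total y 1 with h1 | h1
  · have h2 : y ^ s ≤ 1 := Real.rpow_le_one hy h1 hs0
    have h3 : (0:ℝ) ≤ (y ^ 2)⁻¹ := by positivity
    nlinarith
  · have h2 : y ^ s * (y ^ 2)⁻¹ = y ^ (s - 2) := by
      rw [show (y:ℝ) ^ (2:ℕ) = y ^ (2:ℝ) from (Real.rpow_natCast y 2).symm,
        ← Real.rpow_neg (by linarith), ← Real.rpow_add (by linarith)]
      ring_nf
    rw [h2]
    have h3 : y ^ (s - 2) ≤ 1 :=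
      Real.rpow_le_one_of_one_le_of_nonpos h1 (by linarith)
    have h4 : (0:ℝ) ≤ (y ^ 2)⁻¹ := by positivity
    linarith

lemma rpow_mul_exp_le {b s : ℝ} (hb : 0 < b) (hs0 : 0 ≤ s) (hs2 : s ≤ 2) {x : ℝ}
    (hx : 0 ≤ x) :
    x ^ s * Real.exp (-b * x) ≤ (1 + 16 / b ^ 2) * Real.exp (-(b/2) * x) := by
  have hxs : x ^ s ≤ (1 + 16 / b ^ 2) * Real.exp ((b/2) * x) := by
    have h1 : x ^ s ≤ 1 + x ^ 2 := by
      rcases le_total x 1 with h | h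
      · have := Real.rpow_le_one hx h hs0
        nlinarith [sq_nonneg x]
      · have h2 : x ^ s ≤ x ^ (2:ℝ) := Real.rpow_le_rpow_of_exponent_le h hs2
        rw [show (x:ℝ) ^ (2:ℝ) = x ^ (2:ℕ) from Real.rpow_natCast x 2] at h2
        linarith
    have h2 : x ^ 2 ≤ 16 / b ^ 2 * Real.exp ((b/2) * x) := by
      have h3 : 1 + (b/4) * x ≤ Real.exp ((b/4) * x) := by
        have := Real.add_one_le_exp ((b/4) * x); linarith
      have h4 : ((b/4) * x) ^ 2 ≤ (Real.exp ((b/4) * x)) ^ 2 := by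
        apply sq_le_sq'
        · nlinarith [Real.exp_pos ((b/4) * x), mul_nonneg (by positivity : (0:ℝ) ≤ b/4) hx]
        · nlinarith [mul_nonneg (by positivity : (0:ℝ) ≤ b/4) hx]
      have h5 : (Real.exp ((b/4) * x)) ^ 2 = Real.exp ((b/2) * x) := by
        rw [← Real.exp_nat_mul]; ring_nf
      rw [h5] at h4
      have h6 : b ^ 2 / 16 * x ^ 2 ≤ Real.exp ((b/2) * x) := by nlinarith
      have h7 : b ^ 2 * x ^ 2 ≤ 16 * Real.exp ((b/2) * x) := by
        rw [div_mul_eq_mul_div, div_le_iff₀ (by norm_num : (0:ℝ) < (16:ℝ))] at h6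
        linarith
      rw [div_mul_eq_mul_div, le_div_iff₀ (by positivity : (0:ℝ) < b ^ 2)]
      nlinarith
    have h7 : (1:ℝ) ≤ Real.exp ((b/2) * x) :=
      Real.one_le_exp (by positivity)
    nlinarith
  have hmul := mul_le_mul_of_nonneg_right hxs (Real.exp_pos (-b * x)).le
  calc x ^ s * Real.exp (-b * x)
      ≤ (1 + 16 / b ^ 2) * Real.exp ((b/2) * x) * Real.exp (-b * x) := hmul
    _ = (1 + 16 / b ^ 2) * Real.exp (-(b/2) * x) := by
        rw [mul_assoc, ← Real.exp_add]; ring_nf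

lemma exists_W_bound {b s : ℝ} (hb : 0 < b) (hs0 : 0 ≤ s) (hs2 : s ≤ 2) :
    ∃ C : ℝ, 0 < C ∧ ∀ p : EuclideanSpace ℝ (Fin 3),
      (∫ q, hker b p q) ≤ C ∧ ‖p‖ ^ s * (∫ q, hker b p q) ≤ C := by
  set I1 : ℝ := ∫ u in ball (0:EuclideanSpace ℝ (Fin 3)) 1, (‖u‖ ^ 2)⁻¹ with hI1_def
  set I2 : ℝ := ∫ q : EuclideanSpace ℝ (Fin 3), Real.exp (-b * ‖q‖) with hI2_def
  set I3 : ℝ := ∫ q : EuclideanSpace ℝ (Fin 3), Real.exp (-(b/2) * ‖q‖) with hI3_def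
  have hI1 : 0 ≤ I1 := setIntegral_nonneg measurableSet_ball fun u _ => by positivity
  have hI2 : 0 ≤ I2 := integral_nonneg fun q => (Real.exp_pos _).le
  have hI3 : 0 ≤ I3 := integral_nonneg fun q => (Real.exp_pos _).le
  have h2s : (0:ℝ) ≤ 2 ^ s := Real.rpow_nonneg (by norm_num) s
  have hb16 : (0:ℝ) ≤ 1 + 16 / b ^ 2 := by positivity
  set C0 : ℝ := 2 ^ s * (I2 + (I1 + I2)) + 2 ^ s * (1 + 16 / b ^ 2) * (I1 + I3)
    with hC0_def
  have hC0 : 0 ≤ C0 := by positivity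
  refine ⟨C0 + (I1 + I2) + 1, by positivity, fun p => ?_⟩
  have hW1 : (∫ q, hker b p q) ≤ I1 + I2 := integral_hker_le hb p
  have hW'1 : (∫ q, hker (b/2) p q) ≤ I1 + I3 := integral_hker_le (half_pos hb) p
  have hW0 : 0 ≤ ∫ q, hker b p q := integral_nonneg (hker_nonneg b p)
  have hW'0 : 0 ≤ ∫ q, hker (b/2) p q := integral_nonneg (hker_nonneg (b/2) p)
  constructor
  · linarith
  -- pointwise bound
  have hle : ∀ q, ‖p‖ ^ s * hker b p q ≤
      2 ^ s * (Real.exp (-b * ‖q‖) + hker b p q)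
        + 2 ^ s * (1 + 16 / b ^ 2) * hker (b/2) p q := by
    intro q
    have hkq := hker_nonneg b p q
    have hptri : ‖p‖ ≤ ‖p - q‖ + ‖q‖ := by
      have := norm_add_le (p - q) q
      simpa [sub_add_cancel] using this
    have h1 : ‖p‖ ^ s ≤ 2 ^ s * (‖p - q‖ ^ s + ‖q‖ ^ s) :=
      le_trans (Real.rpow_le_rpow (norm_nonneg p) hptri hs0)
        (rpow_add_le_two_rpow (norm_nonneg _) (norm_nonneg _) hs0)
    have t1 : ‖p - q‖ ^ s * hker b p q ≤ Real.exp (-b * ‖q‖) + hker b p q := by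
      unfold hker
      have h2 := rpow_mul_inv_sq_le hs0 hs2 (norm_nonneg (p - q))
      calc ‖p - q‖ ^ s * (Real.exp (-b * ‖q‖) * (‖p - q‖ ^ 2)⁻¹)
          = Real.exp (-b * ‖q‖) * (‖p - q‖ ^ s * (‖p - q‖ ^ 2)⁻¹) := by ring
        _ ≤ Real.exp (-b * ‖q‖) * (1 + (‖p - q‖ ^ 2)⁻¹) :=
            mul_le_mul_of_nonneg_left h2 (Real.exp_pos _).le
        _ = Real.exp (-b * ‖q‖) + Real.exp (-b * ‖q‖) * (‖p - q‖ ^ 2)⁻¹ := by ring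
    have t2 : ‖q‖ ^ s * hker b p q ≤ (1 + 16 / b ^ 2) * hker (b/2) p q := by
      unfold hker
      have h2 := rpow_mul_exp_le hb hs0 hs2 (norm_nonneg q)
      calc ‖q‖ ^ s * (Real.exp (-b * ‖q‖) * (‖p - q‖ ^ 2)⁻¹)
          = (‖q‖ ^ s * Real.exp (-b * ‖q‖)) * (‖p - q‖ ^ 2)⁻¹ := by ring
        _ ≤ ((1 + 16 / b ^ 2) * Real.exp (-(b/2) * ‖q‖)) * (‖p - q‖ ^ 2)⁻¹ :=
            mul_le_mul_of_nonneg_right h2 (by positivity)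
        _ = (1 + 16 / b ^ 2) * (Real.exp (-(b/2) * ‖q‖) * (‖p - q‖ ^ 2)⁻¹) := by ring
    have step1 : ‖p‖ ^ s * hker b p q ≤ 2 ^ s * (‖p - q‖ ^ s + ‖q‖ ^ s) * hker b p q :=
      mul_le_mul_of_nonneg_right h1 hkq
    have expand : 2 ^ s * (‖p - q‖ ^ s + ‖q‖ ^ s) * hker b p q
        = 2 ^ s * (‖p - q‖ ^ s * hker b p q) + 2 ^ s * (‖q‖ ^ s * hker b p q) := by ring
    have e1 := mul_le_mul_of_nonneg_left t1 h2s
    have e2 := mul_le_mul_of_nonneg_left t2 h2s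
    calc ‖p‖ ^ s * hker b p q
        ≤ 2 ^ s * (‖p - q‖ ^ s * hker b p q) + 2 ^ s * (‖q‖ ^ s * hker b p q) := by
          rw [← expand]; exact step1
      _ ≤ 2 ^ s * (Real.exp (-b * ‖q‖) + hker b p q)
            + 2 ^ s * ((1 + 16 / b ^ 2) * hker (b/2) p q) := add_le_add e1 e2
      _ = _ := by ring
  have hGint : Integrable (fun q : EuclideanSpace ℝ (Fin 3) =>
      2 ^ s * (Real.exp (-b * ‖q‖) + hker b p q)
        + 2 ^ s * (1 + 16 / b ^ 2) * hker (b/2) p q) :=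
    (((integrable_exp_neg_norm hb).add (integrable_hker hb p)).const_mul _).add
      ((integrable_hker (half_pos hb) p).const_mul _)
  have hmono : ‖p‖ ^ s * (∫ q, hker b p q) ≤
      2 ^ s * (I2 + (∫ q, hker b p q))
        + 2 ^ s * (1 + 16 / b ^ 2) * (∫ q, hker (b/2) p q) := by
    rw [← integral_const_mul]
    calc (∫ q, ‖p‖ ^ s * hker b p q)
        ≤ ∫ q : EuclideanSpace ℝ (Fin 3),
            (2 ^ s * (Real.exp (-b * ‖q‖) + hker b p q)
              + 2 ^ s * (1 + 16 / b ^ 2) * hker (b/2) p q) :=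
          integral_mono_of_nonneg
            (ae_of_all _ fun q => mul_nonneg (Real.rpow_nonneg (norm_nonneg p) s)
              (hker_nonneg b p q)) hGint (ae_of_all _ hle)
      _ = (∫ q : EuclideanSpace ℝ (Fin 3), 2 ^ s * (Real.exp (-b * ‖q‖) + hker b p q))
            + ∫ q : EuclideanSpace ℝ (Fin 3),
                2 ^ s * (1 + 16 / b ^ 2) * hker (b/2) p q :=
          integral_add (((integrable_exp_neg_norm hb).add
              (integrable_hker hb p)).const_mul _)
            ((integrable_hker (half_pos hb) p).const_mul _)
      _ = 2 ^ s * (I2 + (∫ q, hker b p q))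
            + 2 ^ s * (1 + 16 / b ^ 2) * (∫ q, hker (b/2) p q) := by
          rw [integral_const_mul, integral_const_mul,
            integral_add (integrable_exp_neg_norm hb) (integrable_hker hb p)]
  have hfin : ‖p‖ ^ s * (∫ q, hker b p q) ≤ C0 := by
    have c1 : 2 ^ s * (I2 + (∫ q, hker b p q)) ≤ 2 ^ s * (I2 + (I1 + I2)) :=
      mul_le_mul_of_nonneg_left (by linarith) h2s
    have c2 : 2 ^ s * (1 + 16 / b ^ 2) * (∫ q, hker (b/2) p q)
        ≤ 2 ^ s * (1 + 16 / b ^ 2) * (I1 + I3) :=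
      mul_le_mul_of_nonneg_left hW'1 (by positivity)
    rw [hC0_def]
    linarith
  linarith

lemma sqrt_le_exp_aux {β : ℝ} (hβ : 0 < β) {x : ℝ} (hx : 0 ≤ x) :
    Real.sqrt x * Real.exp (-β * x) ≤ (1 + 2/β) * Real.exp (-(β/2) * x) := by
  have h1 : Real.sqrt x ≤ 1 + x := by
    nlinarith [Real.sq_sqrt hx, Real.sqrt_nonneg x, sq_nonneg (Real.sqrt x - 1)]
  have h2 : 1 + x ≤ (1 + 2/β) * Real.exp ((β/2) * x) := by
    have h3 : 1 + (β/2) * x ≤ Real.exp ((β/2) * x) := by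
      have := Real.add_one_le_exp ((β/2) * x); linarith
    have h4 : (1 + 2/β) * (1 + (β/2) * x) ≤ (1 + 2/β) * Real.exp ((β/2) * x) :=
      mul_le_mul_of_nonneg_left h3 (by positivity)
    have h5 : (1 + 2/β) * (1 + (β/2) * x) = 1 + 2/β + (β/2) * x + x := by
      field_simp; ring
    nlinarith [mul_nonneg (by positivity : (0:ℝ) ≤ β/2) hx, (by positivity : (0:ℝ) < 2/β)]
  have h6 : Real.sqrt x ≤ (1 + 2/β) * Real.exp ((β/2) * x) := le_trans h1 h2
  have h7 := mul_le_mul_of_nonneg_right h6 (Real.exp_pos (-β * x)).le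
  calc Real.sqrt x * Real.exp (-β * x)
      ≤ (1 + 2/β) * Real.exp ((β/2) * x) * Real.exp (-β * x) := h7
    _ = (1 + 2/β) * Real.exp (-(β/2) * x) := by
        rw [mul_assoc, ← Real.exp_add]; ring_nf

lemma sqrt_energy_exp_le {m β : ℝ} (hm : 0 < m) (hβ : 0 < β)
    (q : EuclideanSpace ℝ (Fin 3)) :
    Real.sqrt (energy m q) * Real.exp (-β * energy m q)
      ≤ (1 + 2/β) * Real.exp (-(β/2) * ‖q‖) := by
  calc Real.sqrt (energy m q) * Real.exp (-β * energy m q)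
      ≤ (1 + 2/β) * Real.exp (-(β/2) * energy m q) :=
        sqrt_le_exp_aux hβ (energy_nonneg q)
    _ ≤ (1 + 2/β) * Real.exp (-(β/2) * ‖q‖) := by
        apply mul_le_mul_of_nonneg_left _ (by positivity)
        apply Real.exp_le_exp.mpr
        have := norm_le_energy hm q
        nlinarith

lemma sqrt_eight_le_three : Real.sqrt 8 ≤ 3 := by
  rw [show (3:ℝ) = Real.sqrt 9 by
    rw [show (9:ℝ) = 3 ^ 2 by norm_num, Real.sqrt_sq (by norm_num : (0:ℝ) ≤ 3)]]
  exact Real.sqrt_le_sqrt (by norm_num)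

lemma pointwise_master {m β : ℝ} (hm : 0 < m) (hβ : 0 < β) (σ : ℝ → ℝ → ℝ)
    {K : ℝ} (hK : 0 < K)
    (hKb : ∀ g : ℝ, 0 < g → totalXsec σ g ≤ K * (g ^ 3)⁻¹)
    (p q : EuclideanSpace ℝ (Fin 3)) (hne : q ≠ p) :
    (Real.exp (-β * energy m q) / energy m q) * relMom m p q *
      Real.sqrt ((relMom m p q) ^ 2 + 4 * m ^ 2) * totalXsec σ (relMom m p q)
    ≤ (6 * K * (1 + 2/β) / m ^ 2) * (energy m p * Real.sqrt (energy m p))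
        * hker (β/2) p q := by
  set g := relMom m p q with hg_def
  set Ep := energy m p with hEp_def
  set Eq := energy m q with hEq_def
  have hEp : 0 < Ep := energy_pos hm p
  have hEq : 0 < Eq := energy_pos hm q
  have hg : 0 < g := relMom_pos hm p q (Ne.symm hne)
  have hd : 0 < ‖p - q‖ ^ 2 :=
    pow_pos (norm_pos_iff.mpr (sub_ne_zero.mpr (Ne.symm hne))) 2
  have hX : 0 ≤ Real.exp (-β * Eq) / Eq := by positivity
  have hS : 0 ≤ Real.sqrt (g ^ 2 + 4 * m ^ 2) := Real.sqrt_nonneg _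
  -- step A : replace totalXsec by K g⁻³
  have stepA : (Real.exp (-β * Eq) / Eq) * g * Real.sqrt (g ^ 2 + 4 * m ^ 2)
        * totalXsec σ g
      ≤ (Real.exp (-β * Eq) / Eq) * g * Real.sqrt (g ^ 2 + 4 * m ^ 2)
        * (K * (g ^ 3)⁻¹) := by
    apply mul_le_mul_of_nonneg_left (hKb g hg)
    positivity
  -- step B : sqrt bound
  have stepB : Real.sqrt (g ^ 2 + 4 * m ^ 2) ≤ 3 * (Real.sqrt Ep * Real.sqrt Eq) := by
    have h1 : g ^ 2 + 4 * m ^ 2 ≤ 8 * (Ep * Eq) := relMom_sq_add_le hm p q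
    calc Real.sqrt (g ^ 2 + 4 * m ^ 2) ≤ Real.sqrt (8 * (Ep * Eq)) :=
          Real.sqrt_le_sqrt h1
      _ = Real.sqrt 8 * (Real.sqrt Ep * Real.sqrt Eq) := by
          rw [Real.sqrt_mul (by norm_num : (0:ℝ) ≤ 8),
            Real.sqrt_mul (energy_nonneg p)]
      _ ≤ 3 * (Real.sqrt Ep * Real.sqrt Eq) := by
          apply mul_le_mul_of_nonneg_right sqrt_eight_le_three
          positivity
  -- step C : inverse square bound
  have stepC : (g ^ 2)⁻¹ ≤ 2 * (Ep * Eq) / (m ^ 2 * ‖p - q‖ ^ 2) := by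
    have h1 : m ^ 2 * ‖p - q‖ ^ 2 ≤ 2 * (Ep * Eq) * g ^ 2 := relMom_sq_lower hm p q
    rw [inv_eq_one_div, div_le_div_iff₀ (by positivity) (by positivity)]
    nlinarith
  -- combine
  have key : (Real.exp (-β * Eq) / Eq) * g * Real.sqrt (g ^ 2 + 4 * m ^ 2)
        * (K * (g ^ 3)⁻¹)
      = K * ((Real.exp (-β * Eq) / Eq) * Real.sqrt (g ^ 2 + 4 * m ^ 2) * (g ^ 2)⁻¹) := by
    field_simp
  have comb : (Real.exp (-β * Eq) / Eq) * Real.sqrt (g ^ 2 + 4 * m ^ 2) * (g ^ 2)⁻¹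
      ≤ (Real.exp (-β * Eq) / Eq) * (3 * (Real.sqrt Ep * Real.sqrt Eq))
          * (2 * (Ep * Eq) / (m ^ 2 * ‖p - q‖ ^ 2)) := by
    apply mul_le_mul
    · exact mul_le_mul_of_nonneg_left stepB hX
    · exact stepC
    · positivity
    · positivity
  have rearr : (Real.exp (-β * Eq) / Eq) * (3 * (Real.sqrt Ep * Real.sqrt Eq))
        * (2 * (Ep * Eq) / (m ^ 2 * ‖p - q‖ ^ 2))
      = (6 / m ^ 2) * (Real.sqrt Eq * Real.exp (-β * Eq)) * (Ep * Real.sqrt Ep)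
          * (‖p - q‖ ^ 2)⁻¹ := by
    field_simp
    ring
  have expbd : Real.sqrt Eq * Real.exp (-β * Eq) ≤ (1 + 2/β) * Real.exp (-(β/2) * ‖q‖) :=
    sqrt_energy_exp_le hm hβ q
  have final : (6 / m ^ 2) * (Real.sqrt Eq * Real.exp (-β * Eq)) * (Ep * Real.sqrt Ep)
        * (‖p - q‖ ^ 2)⁻¹
      ≤ (6 / m ^ 2) * ((1 + 2/β) * Real.exp (-(β/2) * ‖q‖)) * (Ep * Real.sqrt Ep)
        * (‖p - q‖ ^ 2)⁻¹ := by
    apply mul_le_mul_of_nonneg_right _ (by positivity)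
    apply mul_le_mul_of_nonneg_right _ (by positivity)
    exact mul_le_mul_of_nonneg_left expbd (by positivity)
  have hrhs : (6 / m ^ 2) * ((1 + 2/β) * Real.exp (-(β/2) * ‖q‖)) * (Ep * Real.sqrt Ep)
        * (‖p - q‖ ^ 2)⁻¹
      = (6 * K⁻¹ * K * (1 + 2/β) / m ^ 2) * (Ep * Real.sqrt Ep) * hker (β/2) p q := by
    unfold hker
    field_simp
  calc (Real.exp (-β * Eq) / Eq) * g * Real.sqrt (g ^ 2 + 4 * m ^ 2) * totalXsec σ g
      ≤ (Real.exp (-β * Eq) / Eq) * g * Real.sqrt (g ^ 2 + 4 * m ^ 2)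
          * (K * (g ^ 3)⁻¹) := stepA
    _ = K * ((Real.exp (-β * Eq) / Eq) * Real.sqrt (g ^ 2 + 4 * m ^ 2) * (g ^ 2)⁻¹) := key
    _ ≤ K * ((Real.exp (-β * Eq) / Eq) * (3 * (Real.sqrt Ep * Real.sqrt Eq))
          * (2 * (Ep * Eq) / (m ^ 2 * ‖p - q‖ ^ 2))) :=
        mul_le_mul_of_nonneg_left comb hK.le
    _ ≤ K * ((6 / m ^ 2) * ((1 + 2/β) * Real.exp (-(β/2) * ‖q‖)) * (Ep * Real.sqrt Ep)
          * (‖p - q‖ ^ 2)⁻¹) := by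
        rw [rearr]
        exact mul_le_mul_of_nonneg_left final hK.le
    _ = (6 * K * (1 + 2/β) / m ^ 2) * (Ep * Real.sqrt Ep) * hker (β/2) p q := by
        unfold hker
        field_simp

/-- an upper bound `σ(g,Θ) ≤ B' g^{−3} (sin Θ)^c` gives, for every `0 < δ < 1`,
`ν(p) ≤ ν₀ (E(p)/m)^{−(δ+1)/2}`, in particular `ν ≤ ν₀`. -/
theorem soft_interaction_upper_bound_borderline (m β : ℝ) (hm : 0 < m) (hβ : 0 < β)
    (σ : ℝ → ℝ → ℝ) (hσ : ∀ g Θ, 0 ≤ σ g Θ)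
    (c B' : ℝ) (hc : -2 < c) (hB' : 0 < B')
    (hup : ∀ g Θ : ℝ, 0 < g → Θ ∈ Set.Ioo 0 Real.pi →
      σ g Θ ≤ B' * g ^ (-(3:ℝ)) * Real.sin Θ ^ c) :
    ∀ δ : ℝ, 0 < δ → δ < 1 →
      ∃ ν₀ : ℝ, 0 < ν₀ ∧
        (∀ p : EuclideanSpace ℝ (Fin 3),
          collFreq m β σ p ≤ ν₀ * (energy m p / m) ^ (-((δ + 1) / 2))) ∧
        (∀ p : EuclideanSpace ℝ (Fin 3), collFreq m β σ p ≤ ν₀) := by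
  intro δ hδ0 hδ1
  obtain ⟨K, hK, hKb⟩ := exists_totalXsec_bound σ hσ c B' hc hB' hup
  have hb : 0 < β / 2 := by positivity
  set s : ℝ := (2 + δ) / 2 with hs_def
  have hs0 : (0:ℝ) ≤ s := by rw [hs_def]; linarith
  have hs2 : s ≤ 2 := by rw [hs_def]; linarith
  obtain ⟨C, hC, hCb⟩ := exists_W_bound hb hs0 hs2
  set K₂ : ℝ := 6 * K * (1 + 2 / β) / m ^ 2 with hK2_def
  have hK₂ : 0 < K₂ := by positivity
  have h2s : (0:ℝ) < 2 ^ s := Real.rpow_pos_of_pos (by norm_num) s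
  have hms : (0:ℝ) ≤ m ^ s := Real.rpow_nonneg hm.le s
  set C₂ : ℝ := 2 ^ s * (m ^ s * C + C) with hC2_def
  have hC₂ : 0 < C₂ := by positivity
  set a : ℝ := (δ + 1) / 2 with ha_def
  have ha : 0 < a := by rw [ha_def]; linarith
  -- the central estimate
  have main : ∀ p : EuclideanSpace ℝ (Fin 3),
      collFreq m β σ p ≤ (K₂ * C₂ + 1) * (energy m p) ^ (-a) := by
    intro p
    set Ep := energy m p with hEp_def
    have hEp : 0 < Ep := energy_pos hm p
    set W : ℝ := ∫ q, hker (β/2) p q with hW_def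
    obtain ⟨hWC, hWsC⟩ := hCb p
    have hW0 : 0 ≤ W := integral_nonneg (hker_nonneg (β/2) p)
    -- a.e. pointwise bound
    have hae : ∀ᵐ q : EuclideanSpace ℝ (Fin 3), q ≠ p := by
      rw [ae_iff]
      have hset : {q : EuclideanSpace ℝ (Fin 3) | ¬ q ≠ p} = {p} := by ext q; simp
      rw [hset]
      exact measure_singleton p
    have hFle : ∀ᵐ q : EuclideanSpace ℝ (Fin 3),
        (Real.exp (-β * energy m q) / energy m q) * relMom m p q *
          Real.sqrt ((relMom m p q) ^ 2 + 4 * m ^ 2) * totalXsec σ (relMom m p q)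
        ≤ K₂ * (Ep * Real.sqrt Ep) * hker (β/2) p q := by
      filter_upwards [hae] with q hq
      exact pointwise_master hm hβ σ hK hKb p q hq
    have hFnonneg : ∀ q : EuclideanSpace ℝ (Fin 3),
        0 ≤ (Real.exp (-β * energy m q) / energy m q) * relMom m p q *
          Real.sqrt ((relMom m p q) ^ 2 + 4 * m ^ 2) * totalXsec σ (relMom m p q) := by
      intro q
      have h1 : 0 ≤ Real.exp (-β * energy m q) / energy m q := by
        have := energy_pos hm q; positivity
      exact mul_nonneg (mul_nonneg (mul_nonneg h1 (relMom_nonneg hm p q))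
        (Real.sqrt_nonneg _)) (totalXsec_nonneg σ hσ _)
    have hint : (∫ q : EuclideanSpace ℝ (Fin 3),
        (Real.exp (-β * energy m q) / energy m q) * relMom m p q *
          Real.sqrt ((relMom m p q) ^ 2 + 4 * m ^ 2) * totalXsec σ (relMom m p q))
        ≤ K₂ * (Ep * Real.sqrt Ep) * W := by
      calc (∫ q : EuclideanSpace ℝ (Fin 3),
          (Real.exp (-β * energy m q) / energy m q) * relMom m p q *
            Real.sqrt ((relMom m p q) ^ 2 + 4 * m ^ 2) * totalXsec σ (relMom m p q))
          ≤ ∫ q : EuclideanSpace ℝ (Fin 3), K₂ * (Ep * Real.sqrt Ep) * hker (β/2) p q :=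
            integral_mono_of_nonneg (ae_of_all _ hFnonneg)
              ((integrable_hker hb p).const_mul _) hFle
        _ = K₂ * (Ep * Real.sqrt Ep) * W := by rw [integral_const_mul]
    -- decay of W
    have hEs : Ep ^ s * W ≤ C₂ := by
      have h2 : Ep ^ s ≤ 2 ^ s * (m ^ s + ‖p‖ ^ s) :=
        le_trans (Real.rpow_le_rpow (energy_nonneg p) (energy_le_add hm p) hs0)
          (rpow_add_le_two_rpow hm.le (norm_nonneg p) hs0)
      have h3 : Ep ^ s * W ≤ 2 ^ s * (m ^ s + ‖p‖ ^ s) * W :=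
        mul_le_mul_of_nonneg_right h2 hW0
      have h5 : m ^ s * W ≤ m ^ s * C := mul_le_mul_of_nonneg_left hWC hms
      have h7 : 2 ^ s * (m ^ s * W + ‖p‖ ^ s * W) ≤ 2 ^ s * (m ^ s * C + C) :=
        mul_le_mul_of_nonneg_left (by linarith) h2s.le
      calc Ep ^ s * W ≤ 2 ^ s * (m ^ s + ‖p‖ ^ s) * W := h3
        _ = 2 ^ s * (m ^ s * W + ‖p‖ ^ s * W) := by ring
        _ ≤ 2 ^ s * (m ^ s * C + C) := h7
        _ = C₂ := hC2_def.symm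
    have hEpS : 0 < Ep ^ s := Real.rpow_pos_of_pos hEp s
    have hWdec : W ≤ C₂ * Ep ^ (-s) := by
      have h1 : W ≤ C₂ / Ep ^ s := (le_div_iff₀ hEpS).mpr (by nlinarith)
      rwa [div_eq_mul_inv, ← Real.rpow_neg (energy_nonneg p)] at h1
    -- put everything together
    have hstep : collFreq m β σ p ≤ K₂ * (Real.sqrt Ep * W) := by
      unfold collFreq
      rw [← hEp_def]
      calc Ep⁻¹ * (∫ q : EuclideanSpace ℝ (Fin 3),
          (Real.exp (-β * energy m q) / energy m q) * relMom m p q *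
            Real.sqrt ((relMom m p q) ^ 2 + 4 * m ^ 2) * totalXsec σ (relMom m p q))
          ≤ Ep⁻¹ * (K₂ * (Ep * Real.sqrt Ep) * W) :=
            mul_le_mul_of_nonneg_left hint (inv_nonneg.mpr hEp.le)
        _ = K₂ * (Real.sqrt Ep * W) := by
            field_simp
    have hsq : Real.sqrt Ep * Ep ^ (-s) = Ep ^ (-a) := by
      rw [Real.sqrt_eq_rpow, ← Real.rpow_add hEp]
      congr 1
      rw [hs_def, ha_def]
      ring
    calc collFreq m β σ p ≤ K₂ * (Real.sqrt Ep * W) := hstep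
      _ ≤ K₂ * (Real.sqrt Ep * (C₂ * Ep ^ (-s))) :=
          mul_le_mul_of_nonneg_left
            (mul_le_mul_of_nonneg_left hWdec (Real.sqrt_nonneg _)) hK₂.le
      _ = K₂ * C₂ * (Real.sqrt Ep * Ep ^ (-s)) := by ring
      _ = K₂ * C₂ * Ep ^ (-a) := by rw [hsq]
      _ ≤ (K₂ * C₂ + 1) * Ep ^ (-a) := by
          have : (0:ℝ) ≤ Ep ^ (-a) := Real.rpow_nonneg (energy_nonneg p) _
          nlinarith
  have hm1 : m ^ (-a) * m ^ a = 1 := by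
    rw [← Real.rpow_add hm]
    norm_num
  have bullet1 : ∀ p : EuclideanSpace ℝ (Fin 3),
      collFreq m β σ p ≤ ((K₂ * C₂ + 1) * m ^ (-a)) * (energy m p / m) ^ (-a) := by
    intro p
    have hdiv : (energy m p / m) ^ (-a) = energy m p ^ (-a) * m ^ a := by
      rw [Real.div_rpow (energy_nonneg p) hm.le, div_eq_mul_inv,
        Real.rpow_neg hm.le, inv_inv]
    calc collFreq m β σ p ≤ (K₂ * C₂ + 1) * (energy m p) ^ (-a) := main p
      _ = ((K₂ * C₂ + 1) * m ^ (-a)) * (energy m p ^ (-a) * m ^ a) := by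
          rw [show ((K₂ * C₂ + 1) * m ^ (-a)) * (energy m p ^ (-a) * m ^ a)
            = (K₂ * C₂ + 1) * (m ^ (-a) * m ^ a) * energy m p ^ (-a) from by ring,
            hm1, mul_one]
      _ = ((K₂ * C₂ + 1) * m ^ (-a)) * (energy m p / m) ^ (-a) := by rw [hdiv]
  have hν₀ : 0 < (K₂ * C₂ + 1) * m ^ (-a) := by
    have : (0:ℝ) < m ^ (-a) := Real.rpow_pos_of_pos hm _
    positivity
  refine ⟨(K₂ * C₂ + 1) * m ^ (-a), hν₀, bullet1, fun p => ?_⟩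
  have h1 : (energy m p / m) ^ (-a) ≤ 1 :=
    Real.rpow_le_one_of_one_le_of_nonpos
      ((one_le_div hm).mpr (m_le_energy hm p)) (by linarith)
  calc collFreq m β σ p ≤ ((K₂ * C₂ + 1) * m ^ (-a)) * (energy m p / m) ^ (-a) :=
        bullet1 p
    _ ≤ ((K₂ * C₂ + 1) * m ^ (-a)) * 1 := mul_le_mul_of_nonneg_left h1 hν₀.le
    _ = (K₂ * C₂ + 1) * m ^ (-a) := mul_one _
end

section
/- Let m > 0, β > 0 and a > 0, and let the differential cross-section be that of leading-order scalar φ⁴ theory, σ(g, Θ) = a/(g² + 4m²) (independent of Θ). Then the interaction is soft: there exists ν₀ > 0 such that the collision frequency satisfies ν(p) ≤ ν₀ · m/E(p) for all p ∈ ℝ³; in particular ν is bounded above. -/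
open MeasureTheory Real RealInnerProductSpace

lemma exp_neg_mul_norm_integrable (β : ℝ) (hβ : 0 < β) :
    Integrable (fun q : EuclideanSpace ℝ (Fin 3) => Real.exp (-β * ‖q‖)) := by
  set c := max 1 (4 / β) with hc
  have hc1 : (1:ℝ) ≤ c := le_max_left _ _
  have hc2 : 4 / β ≤ c := le_max_right _ _
  have hc0 : (0:ℝ) < c := lt_of_lt_of_le one_pos hc1
  have key : ∀ x : ℝ, 0 ≤ x → Real.exp (-β * x) ≤ c ^ 4 * (1 + x) ^ (-(4:ℝ)) := by
    intro x hx
    have hx1 : (0:ℝ) < 1 + x := by linarith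
    have e1 : 1 + β * x / 4 ≤ Real.exp (β * x / 4) := by
      have := Real.add_one_le_exp (β * x / 4); linarith
    have h2 : 1 + x ≤ c * (1 + β * x / 4) := by
      have hb4 : (1:ℝ) ≤ c * β / 4 := by
        have h := hc2
        rw [div_le_iff₀ hβ] at h
        linarith
      nlinarith
    have h1 : 1 + x ≤ c * Real.exp (β * x / 4) := by
      nlinarith [Real.exp_pos (β * x / 4)]
    have h4 : (1 + x) ^ (4:ℕ) ≤ c ^ 4 * Real.exp (β * x) := by
      calc (1 + x) ^ (4:ℕ) ≤ (c * Real.exp (β * x / 4)) ^ (4:ℕ) := pow_le_pow_left₀ hx1.le h1 4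
      _ = c ^ 4 * Real.exp (β * x / 4) ^ (4:ℕ) := by rw [mul_pow]
      _ = c ^ 4 * Real.exp (β * x) := by
          rw [← Real.exp_nat_mul]; ring_nf
    have hrpow : (1 + x) ^ (-(4:ℝ)) = ((1 + x) ^ (4:ℕ))⁻¹ := by
      rw [Real.rpow_neg hx1.le, ← Real.rpow_natCast (1 + x) 4]
      norm_num
    have hp4 : (0:ℝ) < (1 + x) ^ (4:ℕ) := by positivity
    rw [hrpow, ← div_eq_mul_inv, le_div_iff₀ hp4]
    calc Real.exp (-β * x) * (1 + x) ^ (4:ℕ)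
        ≤ Real.exp (-β * x) * (c ^ 4 * Real.exp (β * x)) :=
          mul_le_mul_of_nonneg_left h4 (Real.exp_pos _).le
      _ = c ^ 4 := by
          rw [mul_comm, mul_assoc, ← Real.exp_add]; simp
  have hfr : Module.finrank ℝ (EuclideanSpace ℝ (Fin 3)) = 3 := by
    simp [finrank_euclideanSpace]
  have hnr : ((Module.finrank ℝ (EuclideanSpace ℝ (Fin 3)) : ℝ)) < 4 := by
    rw [hfr]; norm_num
  have hint := (integrable_one_add_norm (E := EuclideanSpace ℝ (Fin 3)) (μ := volume) hnr).const_mul (c ^ 4)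
  refine hint.mono' ?_ ?_
  · exact Continuous.aestronglyMeasurable (by fun_prop)
  · filter_upwards with q
    rw [Real.norm_eq_abs, abs_of_pos (Real.exp_pos _)]
    exact key ‖q‖ (norm_nonneg q)

lemma energy_pos_s4 (m : ℝ) (hm : 0 < m) (q : EuclideanSpace ℝ (Fin 3)) : 0 < energy m q := by
  unfold energy
  positivity

lemma energy_ge_m (m : ℝ) (hm : 0 < m) (q : EuclideanSpace ℝ (Fin 3)) : m ≤ energy m q := by
  unfold energy
  have h1 : Real.sqrt (‖q‖ ^ 2 + m ^ 2) ^ 2 = ‖q‖ ^ 2 + m ^ 2 :=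
    Real.sq_sqrt (by positivity)
  nlinarith [Real.sqrt_nonneg (‖q‖ ^ 2 + m ^ 2), sq_nonneg ‖q‖]

lemma energy_ge_norm (m : ℝ) (q : EuclideanSpace ℝ (Fin 3)) : ‖q‖ ≤ energy m q := by
  unfold energy
  have h1 : Real.sqrt (‖q‖ ^ 2 + m ^ 2) ^ 2 = ‖q‖ ^ 2 + m ^ 2 :=
    Real.sq_sqrt (by positivity)
  nlinarith [Real.sqrt_nonneg (‖q‖ ^ 2 + m ^ 2), sq_nonneg m, norm_nonneg q]

/-- for the leading-order scalar `φ⁴` cross-section `σ(g,Θ) = a/(g² + 4m²)`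
the interaction is soft: `ν(p) ≤ ν₀ · m/E(p)`, in particular `ν` is bounded above. -/
theorem phi4_soft (m β a : ℝ) (hm : 0 < m) (hβ : 0 < β) (ha : 0 < a) :
    ∃ ν₀ : ℝ, 0 < ν₀ ∧
      (∀ p : EuclideanSpace ℝ (Fin 3),
        collFreq m β (fun g _ => a / (g ^ 2 + 4 * m ^ 2)) p ≤ ν₀ * m / energy m p) ∧
      (∀ p : EuclideanSpace ℝ (Fin 3),
        collFreq m β (fun g _ => a / (g ^ 2 + 4 * m ^ 2)) p ≤ ν₀) := by
  set σ : ℝ → ℝ → ℝ := fun g _ => a / (g ^ 2 + 4 * m ^ 2) with hσ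
  -- total cross-section for φ⁴
  have hTX : ∀ g : ℝ, totalXsec σ g = 4 * π * a / (g ^ 2 + 4 * m ^ 2) := by
    intro g
    unfold totalXsec
    rw [hσ]
    rw [intervalIntegral.integral_const_mul, integral_sin, Real.cos_zero, Real.cos_pi]
    ring
  -- the dominating function
  set h : EuclideanSpace ℝ (Fin 3) → ℝ := fun q => (4 * π * a / m) * Real.exp (-β * ‖q‖) with hh
  have hhint : Integrable h :=
    (exp_neg_mul_norm_integrable β hβ).const_mul _
  set D : ℝ := ∫ q : EuclideanSpace ℝ (Fin 3), h q with hD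
  have hD0 : 0 ≤ D := by
    apply integral_nonneg
    intro q
    have := Real.exp_pos (-β * ‖q‖)
    have : (0:ℝ) < 4 * π * a / m := by positivity
    positivity
  -- main pointwise bound
  have main : ∀ p, collFreq m β σ p ≤ (energy m p)⁻¹ * D := by
    intro p
    unfold collFreq
    have hEp : 0 < energy m p := energy_pos_s4 m hm p
    apply mul_le_mul_of_nonneg_left _ (inv_nonneg.2 hEp.le)
    apply integral_mono_of_nonneg _ hhint
    · -- pointwise bound
      filter_upwards with q
      set g := relMom m p q with hg
      set S := g ^ 2 + 4 * m ^ 2 with hS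
      have hS0 : 0 < S := by positivity
      have hg0 : 0 ≤ g := Real.sqrt_nonneg _
      have hEq : 0 < energy m q := energy_pos_s4 m hm q
      have hsqS : Real.sqrt S * Real.sqrt S = S := Real.mul_self_sqrt hS0.le
      have hgle : g ≤ Real.sqrt S := by
        rw [show g = Real.sqrt (g^2) by rw [Real.sqrt_sq hg0]]
        apply Real.sqrt_le_sqrt
        nlinarith
      have hgS : g * Real.sqrt S ≤ S := by
        nlinarith [Real.sqrt_nonneg S]
      have hA : Real.exp (-β * energy m q) / energy m q ≤ Real.exp (-β * ‖q‖) / m := by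
        apply div_le_div₀ (Real.exp_pos _).le _ hm (energy_ge_m m hm q)
        apply Real.exp_le_exp.2
        have := energy_ge_norm m q
        nlinarith
      have hA0 : 0 ≤ Real.exp (-β * energy m q) / energy m q := by positivity
      rw [hTX g]
      calc Real.exp (-β * energy m q) / energy m q * g * Real.sqrt S * (4 * π * a / S)
          = (Real.exp (-β * energy m q) / energy m q) * (g * Real.sqrt S) * (4 * π * a / S) := by
            ring
        _ ≤ (Real.exp (-β * energy m q) / energy m q) * S * (4 * π * a / S) := by
            have h4S : 0 ≤ 4 * π * a / S := by positivity
            apply mul_le_mul_of_nonneg_right _ h4S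
            exact mul_le_mul_of_nonneg_left hgS hA0
        _ = (Real.exp (-β * energy m q) / energy m q) * (4 * π * a) := by
            field_simp
        _ ≤ (Real.exp (-β * ‖q‖) / m) * (4 * π * a) := by
            apply mul_le_mul_of_nonneg_right hA (by positivity)
        _ = h q := by rw [hh]; ring
    · -- nonnegativity of the integrand
      filter_upwards with q
      rw [hTX (relMom m p q)]
      have hEq : 0 < energy m q := energy_pos_s4 m hm q
      have hg0 : 0 ≤ relMom m p q := Real.sqrt_nonneg _
      have hS0 : 0 < (relMom m p q) ^ 2 + 4 * m ^ 2 := by positivity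
      positivity
  refine ⟨D / m + 1, by positivity, ?_, ?_⟩
  · intro p
    have hEp : 0 < energy m p := energy_pos_s4 m hm p
    have : (D / m + 1) * m / energy m p = (D + m) * (energy m p)⁻¹ := by
      field_simp
    rw [this]
    calc collFreq m β σ p ≤ (energy m p)⁻¹ * D := main p
      _ ≤ (D + m) * (energy m p)⁻¹ := by
          rw [mul_comm]
          apply mul_le_mul_of_nonneg_right (by linarith) (inv_nonneg.2 hEp.le)
  · intro p
    have hEp : 0 < energy m p := energy_pos_s4 m hm p
    calc collFreq m β σ p ≤ (energy m p)⁻¹ * D := main p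
      _ ≤ m⁻¹ * D := by
          apply mul_le_mul_of_nonneg_right _ hD0
          exact inv_anti₀ hm (energy_ge_m m hm p)
      _ ≤ D / m + 1 := by
          rw [div_eq_mul_inv, mul_comm D m⁻¹]
          linarith
end

section
/- Let M > 0, let ρ : ℝ → ℝ be continuous on [0, M], and let γ₀ ∈ (0, M). Then the correlator G(ω) = ∫_0^M ρ(γ)/(ω + iγ) dγ has a discontinuity of size 2πρ(γ₀) across the negative imaginary axis at ω = −iγ₀: the limit as ε → 0⁺ of G(ε − iγ₀) − G(−ε − iγ₀) equals 2π · ρ(γ₀). -/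
open MeasureTheory Filter Complex

/-- The retarded correlator `G(ω) = ∫_0^M ρ(γ)/(ω + iγ) dγ`. -/
noncomputable def corr (M : ℝ) (ρ : ℝ → ℝ) (ω : ℂ) : ℂ :=
  ∫ γ in (0:ℝ)..M, (ρ γ : ℂ) / (ω + Complex.I * (γ : ℂ))

/-- Poisson-kernel antiderivative: `∫ ε/((x-γ₀)²+ε²) = arctan`. -/
lemma poisson_integral_eq (a b γ₀ : ℝ) {ε : ℝ} (hε : 0 < ε) :
    ∫ x in a..b, ε / ((x - γ₀)^2 + ε^2) =
      Real.arctan ((b - γ₀)/ε) - Real.arctan ((a - γ₀)/ε) := by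
  have h := intervalIntegral.integral_comp_sub_right (a := a) (b := b)
      (fun x => ε / (x^2 + ε^2)) γ₀
  rw [h]
  have h2 : ∀ x : ℝ, ε / (x^2 + ε^2) = (fun y => ε⁻¹ * (1 + y^2)⁻¹) (x/ε) := by
    intro x
    have : x^2 + ε^2 ≠ 0 := by positivity
    field_simp
    ring
  have h3 : (∫ x in (a - γ₀)/ε..(b - γ₀)/ε, (1 + x^2)⁻¹)
      = Real.arctan ((b - γ₀)/ε) - Real.arctan ((a - γ₀)/ε) :=
    integral_inv_one_add_sq
  calc ∫ x in (a - γ₀)..(b - γ₀), ε / (x^2 + ε^2)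
      = ∫ x in (a - γ₀)..(b - γ₀), (fun y => ε⁻¹ * (1 + y^2)⁻¹) (x/ε) :=
        intervalIntegral.integral_congr fun x _ => h2 x
    _ = ε • ∫ y in (a - γ₀)/ε..(b - γ₀)/ε, ε⁻¹ * (1 + y^2)⁻¹ :=
        intervalIntegral.integral_comp_div (f := fun y => ε⁻¹ * (1 + y^2)⁻¹) hε.ne'
    _ = ε * (ε⁻¹ * (Real.arctan ((b - γ₀)/ε) - Real.arctan ((a - γ₀)/ε))) := by
        rw [intervalIntegral.integral_const_mul, h3, smul_eq_mul]
    _ = _ := by field_simp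

/-- The normalized arctan expression tends to `1`. -/
lemma arctan_limit (γ₀ M : ℝ) (h1 : 0 < γ₀) (h2 : γ₀ < M) :
    Tendsto (fun ε : ℝ => (Real.arctan ((M - γ₀)/ε) - Real.arctan ((0 - γ₀)/ε)) / Real.pi)
      (nhdsWithin 0 (Set.Ioi 0)) (nhds 1) := by
  have hM : Tendsto (fun ε : ℝ => (M - γ₀)/ε) (nhdsWithin 0 (Set.Ioi 0)) atTop := by
    simpa [div_eq_mul_inv] using tendsto_inv_nhdsGT_zero.const_mul_atTop (sub_pos.2 h2)
  have h0 : Tendsto (fun ε : ℝ => (0 - γ₀)/ε) (nhdsWithin 0 (Set.Ioi 0)) atBot := by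
    have t1 := tendsto_inv_nhdsGT_zero.const_mul_atTop h1
    have t2 := tendsto_neg_atTop_atBot.comp t1
    simpa [div_eq_mul_inv, Function.comp, zero_sub, neg_mul] using t1
  have hA : Tendsto (fun ε : ℝ => Real.arctan ((M - γ₀)/ε)) (nhdsWithin 0 (Set.Ioi 0))
      (nhds (Real.pi/2)) :=
    (Real.tendsto_arctan_atTop.mono_right nhdsWithin_le_nhds).comp hM
  have hB : Tendsto (fun ε : ℝ => Real.arctan ((0 - γ₀)/ε)) (nhdsWithin 0 (Set.Ioi 0))
      (nhds (-(Real.pi/2))) :=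
    (Real.tendsto_arctan_atBot.mono_right nhdsWithin_le_nhds).comp h0
  have hT := (hA.sub hB).div_const Real.pi
  have hπ : (Real.pi/2 - -(Real.pi/2)) / Real.pi = 1 := by
    field_simp
    norm_num
  rwa [hπ] at hT

/-- The key pointwise algebraic identity. -/
lemma pointwise_identity (ε γ γ₀ r : ℝ) (hε : ε ≠ 0) :
    (r : ℂ) / ((ε:ℂ) - Complex.I * γ₀ + Complex.I * γ) -
      (r : ℂ) / (-(ε:ℂ) - Complex.I * γ₀ + Complex.I * γ) =
      (ε / (Real.pi * ((γ - γ₀)^2 + ε^2))) • ((2 * Real.pi * r : ℝ) : ℂ) := by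
  have hπ : ((Real.pi : ℝ) : ℂ) ≠ 0 := by exact_mod_cast Real.pi_ne_zero
  have hd : ((γ - γ₀)^2 + ε^2 : ℝ) ≠ 0 := by positivity
  have hdc : (((γ:ℂ) - γ₀)^2 + (ε:ℂ)^2) ≠ 0 := by
    intro h; apply hd
    exact_mod_cast (by push_cast at h ⊢; exact h : ((((γ - γ₀)^2 + ε^2 : ℝ)):ℂ) = 0)
  have h1 : ((ε:ℂ) - Complex.I * γ₀ + Complex.I * γ) ≠ 0 := by
    intro h; have := congrArg Complex.re h; simp at this; exact hε this
  have h2 : (-(ε:ℂ) - Complex.I * γ₀ + Complex.I * γ) ≠ 0 := by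
    intro h; have := congrArg Complex.re h; simp at this; exact hε this
  rw [Complex.real_smul]
  push_cast
  field_simp
  ring_nf
  simp only [Complex.I_sq]
  ring

lemma corr_integrand_integrable (M : ℝ) (hM : 0 < M) (ρ : ℝ → ℝ)
    (hρ : ContinuousOn ρ (Set.Icc 0 M)) (ω : ℂ) (hω : ω.re ≠ 0) :
    IntervalIntegrable (fun γ : ℝ => (ρ γ : ℂ) / (ω + Complex.I * (γ : ℂ)))
      volume 0 M := by
  apply ContinuousOn.intervalIntegrable
  rw [Set.uIcc_of_le hM.le]
  apply ContinuousOn.div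
  · exact Complex.continuous_ofReal.comp_continuousOn hρ
  · exact (continuous_const.add (continuous_const.mul Complex.continuous_ofReal)).continuousOn
  · intro x _ h
    have := congrArg Complex.re h
    simp at this
    exact hω this

/-- the correlator has a discontinuity of size `2πρ(γ₀)` across the negative
imaginary axis at `ω = −iγ₀`, `γ₀ ∈ (0, M)`. -/
theorem correlator_discontinuity (M : ℝ) (hM : 0 < M) (ρ : ℝ → ℝ)
    (hρ : ContinuousOn ρ (Set.Icc 0 M)) (γ₀ : ℝ) (hγ₀ : γ₀ ∈ Set.Ioo 0 M) :
    Tendsto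
      (fun ε : ℝ =>
        corr M ρ ((ε : ℂ) - Complex.I * (γ₀ : ℂ)) -
          corr M ρ (-(ε : ℂ) - Complex.I * (γ₀ : ℂ)))
      (nhdsWithin 0 (Set.Ioi 0)) (nhds (2 * Real.pi * (ρ γ₀ : ℂ))) := by
  obtain ⟨hγ1, hγ2⟩ := hγ₀
  set φ : ℝ → ℝ → ℝ := fun ε γ => ε / (Real.pi * ((γ - γ₀)^2 + ε^2)) with hφ
  set g : ℝ → ℂ := fun γ => ((2 * Real.pi * ρ γ : ℝ) : ℂ) with hg
  have hgc : ContinuousOn g (Set.Icc 0 M) :=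
    Complex.continuous_ofReal.comp_continuousOn (continuousOn_const.mul hρ)
  -- hypotheses for the peak-function lemma
  have hnφ : ∀ᶠ ε in nhdsWithin (0:ℝ) (Set.Ioi 0), ∀ x ∈ Set.Ioc (0:ℝ) M, 0 ≤ φ ε x := by
    filter_upwards [self_mem_nhdsWithin] with ε (hε : (0:ℝ) < ε)
    intro x _
    positivity
  have hlφ : ∀ u : Set ℝ, IsOpen u → γ₀ ∈ u →
      TendstoUniformlyOn φ 0 (nhdsWithin (0:ℝ) (Set.Ioi 0)) (Set.Ioc (0:ℝ) M \ u) := by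
    intro u hu hxu
    obtain ⟨δ, hδ, hball⟩ := Metric.isOpen_iff.1 hu γ₀ hxu
    rw [Metric.tendstoUniformlyOn_iff]
    intro η hη
    have hmem : Set.Ioo (0:ℝ) (η * (Real.pi * δ^2)) ∈ nhdsWithin (0:ℝ) (Set.Ioi 0) :=
      Ioo_mem_nhdsGT_of_mem ⟨le_rfl, by positivity⟩
    filter_upwards [hmem] with ε hε
    intro x hx
    have hεpos : 0 < ε := hε.1
    have hxd : δ ≤ |x - γ₀| := by
      by_contra h
      push_neg at h
      exact hx.2 (hball (by simpa [Real.dist_eq] using h))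
    have hδ2 : δ^2 ≤ (x - γ₀)^2 := by
      have := pow_le_pow_left₀ hδ.le hxd 2
      simpa [sq_abs] using this
    have hφle : φ ε x ≤ ε / (Real.pi * δ^2) := by
      apply div_le_div_of_nonneg_left hεpos.le (by positivity)
      have hπ := Real.pi_pos
      nlinarith [sq_nonneg ε]
    have hlt : ε / (Real.pi * δ^2) < η := by
      rw [div_lt_iff₀ (by positivity)]
      calc ε < η * (Real.pi * δ^2) := hε.2
        _ = η * (Real.pi * δ^2) := rfl
    have hφnn : 0 ≤ φ ε x := by positivity
    have : dist (0:ℝ) (φ ε x) = φ ε x := by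
      rw [Real.dist_eq, abs_sub_comm, sub_zero, _root_.abs_of_nonneg hφnn]
    simp only [Pi.zero_apply]
    rw [this]
    exact lt_of_le_of_lt hφle hlt
  have hiφ : Tendsto (fun ε => ∫ x in Set.Ioc (0:ℝ) M, φ ε x)
      (nhdsWithin (0:ℝ) (Set.Ioi 0)) (nhds 1) := by
    apply Tendsto.congr' _ (arctan_limit γ₀ M hγ1 hγ2)
    filter_upwards [self_mem_nhdsWithin] with ε (hε : (0:ℝ) < ε)
    rw [← intervalIntegral.integral_of_le hM.le]
    have hcongr : ∀ x ∈ Set.uIcc (0:ℝ) M,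
        φ ε x = Real.pi⁻¹ * (ε / ((x - γ₀)^2 + ε^2)) := by
      intro x _
      rw [hφ]
      have : (x - γ₀)^2 + ε^2 ≠ 0 := by positivity
      field_simp
    rw [intervalIntegral.integral_congr hcongr, intervalIntegral.integral_const_mul,
      poisson_integral_eq 0 M γ₀ hε, inv_mul_eq_div]
  have h'iφ : ∀ᶠ ε in nhdsWithin (0:ℝ) (Set.Ioi 0),
      AEStronglyMeasurable (φ ε) (volume.restrict (Set.Ioc (0:ℝ) M)) := by
    filter_upwards [self_mem_nhdsWithin] with ε (hε : (0:ℝ) < ε)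
    have : Continuous (φ ε) := by
      apply continuous_const.div
      · fun_prop
      · intro x
        positivity
    exact this.aestronglyMeasurable.restrict
  have hmg : IntegrableOn g (Set.Ioc (0:ℝ) M) volume :=
    (hgc.integrableOn_Icc).mono_set Set.Ioc_subset_Icc_self
  have hcg : Tendsto g (nhdsWithin γ₀ (Set.Ioc (0:ℝ) M)) (nhds (g γ₀)) :=
    (hgc γ₀ ⟨hγ1.le, hγ2.le⟩).mono Set.Ioc_subset_Icc_self
  have key := tendsto_setIntegral_peak_smul_of_integrableOn_of_tendsto
    (μ := volume) (l := nhdsWithin (0:ℝ) (Set.Ioi 0))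
    measurableSet_Ioc measurableSet_Ioc subset_rfl self_mem_nhdsWithin
    measure_Ioc_lt_top.ne hnφ hlφ hiφ h'iφ hmg hcg
  have hval : g γ₀ = 2 * Real.pi * (ρ γ₀ : ℂ) := by
    rw [hg]; push_cast; ring
  rw [← hval]
  apply key.congr'
  filter_upwards [self_mem_nhdsWithin] with ε (hε : (0:ℝ) < ε)
  have i1 := corr_integrand_integrable M hM ρ hρ ((ε:ℂ) - Complex.I * γ₀) (by simp [hε.ne'])
  have i2 := corr_integrand_integrable M hM ρ hρ (-(ε:ℂ) - Complex.I * γ₀) (by simp [hε.ne'])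
  rw [corr, corr, ← intervalIntegral.integral_sub i1 i2]
  rw [show (∫ γ in (0:ℝ)..M,
      ((ρ γ : ℂ) / ((ε:ℂ) - Complex.I * γ₀ + Complex.I * γ) -
        (ρ γ : ℂ) / (-(ε:ℂ) - Complex.I * γ₀ + Complex.I * γ))) =
      ∫ γ in (0:ℝ)..M, φ ε γ • g γ from
    intervalIntegral.integral_congr fun γ _ => pointwise_identity ε γ γ₀ (ρ γ) hε.ne']
  rw [intervalIntegral.integral_of_le hM.le]
end

section
/- Let M > 0, let ρ : ℝ → ℝ be continuous on [0, M], let γ₀ ∈ (0, M) and suppose ρ(γ₀) ≠ 0. Then the correlator G(ω) = ∫_0^M ρ(γ)/(ω + iγ) dγ has a genuine branch-cut at −iγ₀: there is no continuous function h defined on an open neighborhood U of −iγ₀ in ℂ such that h(ω) = G(ω) for every ω ∈ U with Re ω ≠ 0. -/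
/-!
Across the imaginary axis the correlator jumps by a Poisson integral: for real `y ≠ 0`,
`G(-iγ₀ + y) - G(-iγ₀ - y) = 2π ∫ P_y(γ - γ₀) ρ(γ) dγ` with `P_y(x) = y / (π (x² + y²))`.
The kernels `P_y` are the rescalings `y⁻¹ φ(x / y)` of the Cauchy density `φ`, hence an
approximate identity, so the jump tends to `2π ρ(γ₀) ≠ 0` as `y → 0⁺`. A continuous `h` agreeing
with `G` off the axis near `-iγ₀` would force the jump to tend to `h(-iγ₀) - h(-iγ₀) = 0`.
-/

open MeasureTheory Complex

open Filter Topology Set Real Bornology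

noncomputable def halfPlanePoissonKernel (y x : ℝ) : ℝ := y / (π * (x ^ 2 + y ^ 2))

lemma integral_inv_pi_mul_one_add_sq : ∫ t : ℝ, (π * (1 + t ^ 2))⁻¹ = 1 := by
  simp_rw [mul_inv, integral_const_mul, integral_univ_inv_one_add_sq, inv_mul_cancel₀ pi_ne_zero]

lemma tendsto_norm_mul_inv_pi_mul_one_add_sq_cobounded :
    Tendsto (fun t : ℝ ↦ ‖t‖ * (π * (1 + t ^ 2))⁻¹) (cobounded ℝ) (𝓝 0) := by
  have hdecay : Tendsto (fun t : ℝ ↦ π⁻¹ * ‖t‖⁻¹) (cobounded ℝ) (𝓝 0) := by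
    simpa using (tendsto_inv₀_cobounded (α := ℝ)).norm.const_mul π⁻¹
  refine squeeze_zero_norm (fun t ↦ ?_) hdecay
  rw [Real.norm_of_nonneg (by positivity), Real.norm_eq_abs, ← sq_abs t]
  rcases eq_or_ne t 0 with rfl | ht
  · simp
  have ht' : 0 < |t| := abs_pos.mpr ht
  field_simp
  nlinarith

lemma tendsto_integral_halfPlanePoissonKernel_mul {a b γ₀ : ℝ} {ρ : ℝ → ℝ}
    (hρ : ContinuousOn ρ (Icc a b)) (hγ₀ : γ₀ ∈ Ioo a b) :
    Tendsto (fun y ↦ ∫ γ in a..b, halfPlanePoissonKernel y (γ - γ₀) * ρ γ) (𝓝[>] 0)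
      (𝓝 (ρ γ₀)) := by
  have hnhds : Icc a b ∈ 𝓝 γ₀ := Icc_mem_nhds hγ₀.1 hγ₀.2
  have hpeak := tendsto_integral_comp_smul_smul_of_integrable' (μ := volume) (x₀ := γ₀)
    (φ := fun t : ℝ ↦ (π * (1 + t ^ 2))⁻¹) (fun t ↦ by positivity)
    integral_inv_pi_mul_one_add_sq
    (by simpa using tendsto_norm_mul_inv_pi_mul_one_add_sq_cobounded)
    ((integrable_indicator_iff measurableSet_Icc).mpr hρ.integrableOn_Icc)
    ((hρ.continuousAt hnhds).congr
      (mem_of_superset hnhds fun γ hγ ↦ (indicator_of_mem hγ ρ).symm))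
  rw [indicator_of_mem (mem_of_mem_nhds hnhds)] at hpeak
  refine (hpeak.comp tendsto_inv_nhdsGT_zero).congr' ?_
  filter_upwards [self_mem_nhdsWithin] with y (hy : 0 < y)
  simp only [Function.comp, Module.finrank_self, pow_one, smul_eq_mul]
  rw [intervalIntegral.integral_of_le (hγ₀.1.le.trans hγ₀.2.le), ← integral_Icc_eq_integral_Ioc,
    ← integral_indicator measurableSet_Icc]
  congr 1 with γ
  rw [indicator_mul_right, halfPlanePoissonKernel]
  congr 1
  field_simp
  ring

lemma inv_sub_inv_eq_halfPlanePoissonKernel {y : ℝ} (hy : y ≠ 0) (u : ℝ) :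
    ((y : ℂ) + I * u)⁻¹ - (-(y : ℂ) + I * u)⁻¹ = 2 * π * halfPlanePoissonKernel y u := by
  have h₁ : (y : ℂ) + I * u ≠ 0 := fun h ↦ hy (by simpa using congrArg re h)
  have h₂ : -(y : ℂ) + I * u ≠ 0 := fun h ↦ hy (by simpa using congrArg re h)
  have h₃ : (u : ℂ) ^ 2 + (y : ℂ) ^ 2 ≠ 0 := by
    exact_mod_cast (by positivity : u ^ 2 + y ^ 2 ≠ 0)
  have hπ : (π : ℂ) ≠ 0 := ofReal_ne_zero.mpr pi_ne_zero
  rw [halfPlanePoissonKernel]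
  push_cast
  field_simp
  ring_nf
  rw [I_sq]
  ring

lemma intervalIntegrable_div_add_I_mul {M : ℝ} {ρ : ℝ → ℝ} (hρ : ContinuousOn ρ (uIcc 0 M))
    {ω : ℂ} (hω : ω.re ≠ 0) :
    IntervalIntegrable (fun γ : ℝ ↦ (ρ γ : ℂ) / (ω + I * γ)) volume 0 M :=
  ((continuous_ofReal.comp_continuousOn hρ).div (by fun_prop) fun γ _ h ↦
    hω (by simpa using congrArg re h)).intervalIntegrable

lemma corr_add_sub_corr_sub {M : ℝ} {ρ : ℝ → ℝ} (hρ : ContinuousOn ρ (uIcc 0 M)) (γ₀ : ℝ)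
    {y : ℝ} (hy : y ≠ 0) :
    corr M ρ (-I * γ₀ + y) - corr M ρ (-I * γ₀ - y) =
      ((2 * π * ∫ γ in (0:ℝ)..M, halfPlanePoissonKernel y (γ - γ₀) * ρ γ : ℝ) : ℂ) := by
  rw [corr, corr, ← intervalIntegral.integral_sub
    (intervalIntegrable_div_add_I_mul hρ (by simpa using hy))
    (intervalIntegrable_div_add_I_mul hρ (by simpa using hy)),
    ← intervalIntegral.integral_const_mul, ← intervalIntegral.integral_ofReal]
  refine intervalIntegral.integral_congr fun γ _ ↦ ?_
  have key := inv_sub_inv_eq_halfPlanePoissonKernel hy (γ - γ₀)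
  push_cast at key ⊢
  rw [← mul_assoc, ← key]
  ring

lemma tendsto_sub_zero_of_continuousAt_extension {f h : ℂ → ℂ} {U : Set ℂ} {z : ℂ}
    (hz : z.re = 0) (hU : U ∈ 𝓝 z) (hh : ContinuousAt h z)
    (hfh : ∀ ω ∈ U, ω.re ≠ 0 → h ω = f ω) :
    Tendsto (fun y : ℝ ↦ f (z + y) - f (z - y)) (𝓝[≠] 0) (𝓝 0) := by
  have hplus : Tendsto (fun y : ℝ ↦ z + y) (𝓝[≠] 0) (𝓝 z) := tendsto_nhdsWithin_of_tendsto_nhds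
    (by simpa using (by fun_prop : Continuous fun y : ℝ ↦ z + y).tendsto 0)
  have hminus : Tendsto (fun y : ℝ ↦ z - y) (𝓝[≠] 0) (𝓝 z) := tendsto_nhdsWithin_of_tendsto_nhds
    (by simpa using (by fun_prop : Continuous fun y : ℝ ↦ z - y).tendsto 0)
  have hlim := (hh.tendsto.comp hplus).sub (hh.tendsto.comp hminus)
  rw [sub_self] at hlim
  refine hlim.congr' ?_
  filter_upwards [self_mem_nhdsWithin, hplus hU, hminus hU] with y (hy : y ≠ 0) hyU hyU'
  simp only [Function.comp]
  rw [hfh _ hyU (by simpa [hz] using hy), hfh _ hyU' (by simpa [hz] using hy)]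

theorem correlator_branch_cut_general (M : ℝ) (ρ : ℝ → ℝ)
    (hρ : ContinuousOn ρ (Set.Icc 0 M)) (γ₀ : ℝ) (hγ₀ : γ₀ ∈ Set.Ioo 0 M)
    (hργ₀ : ρ γ₀ ≠ 0) :
    ¬ ∃ (U : Set ℂ) (h : ℂ → ℂ), IsOpen U ∧ (-Complex.I * (γ₀ : ℂ)) ∈ U ∧
        ContinuousOn h U ∧ ∀ ω ∈ U, ω.re ≠ 0 → h ω = corr M ρ ω := by
  rintro ⟨U, h, hU, hγ₀U, hh, hhG⟩
  have hρ' : ContinuousOn ρ (uIcc 0 M) := by rwa [uIcc_of_le (hγ₀.1.trans hγ₀.2).le]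
  have hjump_zero := tendsto_sub_zero_of_continuousAt_extension (by simp) (hU.mem_nhds hγ₀U)
    (hh.continuousAt (hU.mem_nhds hγ₀U)) hhG
  have hjump_lim : Tendsto (fun y : ℝ ↦ corr M ρ (-I * γ₀ + y) - corr M ρ (-I * γ₀ - y))
      (𝓝[>] 0) (𝓝 ((2 * π * ρ γ₀ : ℝ) : ℂ)) := by
    refine (continuous_ofReal.tendsto _).comp
      ((tendsto_integral_halfPlanePoissonKernel_mul hρ hγ₀).const_mul (2 * π)) |>.congr' ?_
    filter_upwards [self_mem_nhdsWithin] with y (hy : 0 < y)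
    exact (corr_add_sub_corr_sub hρ' γ₀ hy.ne').symm
  have hjump_eq := tendsto_nhds_unique hjump_lim
    (hjump_zero.mono_left (nhdsWithin_mono _ fun y hy ↦ ne_of_gt hy))
  norm_num [pi_ne_zero, hργ₀] at hjump_eq

/-- if `ρ(γ₀) ≠ 0` for some `γ₀ ∈ (0, M)`, the correlator has a genuine
branch-cut at `−iγ₀`: no continuous function on a neighborhood of `−iγ₀` agrees with `G`
off the imaginary axis. -/
theorem correlator_branch_cut (M : ℝ) (hM : 0 < M) (ρ : ℝ → ℝ)
    (hρ : ContinuousOn ρ (Set.Icc 0 M)) (γ₀ : ℝ) (hγ₀ : γ₀ ∈ Set.Ioo 0 M)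
    (hργ₀ : ρ γ₀ ≠ 0) :
    ¬ ∃ (U : Set ℂ) (h : ℂ → ℂ), IsOpen U ∧ (-Complex.I * (γ₀ : ℂ)) ∈ U ∧
        ContinuousOn h U ∧ ∀ ω ∈ U, ω.re ≠ 0 → h ω = corr M ρ ω :=
  correlator_branch_cut_general M ρ hρ γ₀ hγ₀ hργ₀
end

section
/- Let k > 0, c ∈ ℝ, and x₀ ∈ (−k, k), and define F(ω) = ∫_{−1}^{1} (ω − k·x + ic)⁻¹ dx. Then F is discontinuous across the branch-cut segment Im ω = −c, −k ≤ Re ω ≤ k: the limit as ε → 0⁺ of F(x₀ + iε − ic) − F(x₀ − iε − ic) equals −2πi/k. -/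
open MeasureTheory Filter Complex

/-- The RTA angular resolvent integral `F(ω) = ∫_{−1}^{1} (ω − kx + ic)⁻¹ dx`. -/
noncomputable def rtaResolvent (k c : ℝ) (ω : ℂ) : ℂ :=
  ∫ x in (-1:ℝ)..1, (ω - (k : ℂ) * (x : ℂ) + Complex.I * (c : ℂ))⁻¹

lemma rta_eval (k : ℝ) (hk : 0 < k) (z : ℂ) (hz : z.im ≠ 0) :
    (∫ x in (-1:ℝ)..1, (z - (k:ℂ) * x)⁻¹) = (Complex.log (z + k) - Complex.log (z - k)) / k := by
  have hk0 : (k:ℂ) ≠ 0 := by exact_mod_cast hk.ne'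
  have hne : ∀ x : ℝ, z - (k:ℂ) * x ≠ 0 := by
    intro x h
    apply hz
    have := congrArg Complex.im h
    simpa using this
  have key : ∀ x ∈ Set.uIcc (-1:ℝ) 1,
      HasDerivAt (fun x : ℝ => -(Complex.log (z - (k:ℂ) * x)) / k) (z - (k:ℂ) * x)⁻¹ x := by
    intro x _
    have hinner : HasDerivAt (fun x : ℝ => z - (k:ℂ) * x) (-(k:ℂ)) x := by
      simpa using ((hasDerivAt_id x).ofReal_comp.const_mul (k:ℂ)).const_sub z
    have hmem : z - (k:ℂ) * x ∈ Complex.slitPlane := by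
      right; simpa using hz
    have := (Complex.hasDerivAt_log hmem).comp x hinner
    have h2 := (this.neg.div_const (k:ℂ))
    convert h2 using 1
    rfl
    rfl
    field_simp
  have hcont : ContinuousOn (fun x : ℝ => (z - (k:ℂ) * x)⁻¹) (Set.uIcc (-1:ℝ) 1) := by
    apply ContinuousOn.inv₀
    · fun_prop
    · intro x _; exact hne x
  have := intervalIntegral.integral_eq_sub_of_hasDerivAt key (hcont.intervalIntegrable)
  rw [this]
  push_cast
  ring

lemma rta_shift (k c : ℝ) (w : ℂ) :
    rtaResolvent k c (w - Complex.I * c) = ∫ x in (-1:ℝ)..1, (w - (k:ℂ) * x)⁻¹ := by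
  unfold rtaResolvent
  congr 1
  ext x
  ring_nf

/-- `F` jumps by `−2πi/k` across the branch-cut segment
`Im ω = −c`, `−k ≤ Re ω ≤ k`, at any interior point `x₀ ∈ (−k, k)`. -/
theorem rta_resolvent_jump (k c x₀ : ℝ) (hk : 0 < k) (hx₀ : x₀ ∈ Set.Ioo (-k) k) :
    Tendsto
      (fun ε : ℝ =>
        rtaResolvent k c ((x₀ : ℂ) + Complex.I * (ε : ℂ) - Complex.I * (c : ℂ)) -
          rtaResolvent k c ((x₀ : ℂ) - Complex.I * (ε : ℂ) - Complex.I * (c : ℂ)))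
      (nhdsWithin 0 (Set.Ioi 0))
      (nhds (-2 * Real.pi * Complex.I / (k : ℂ))) := by
  obtain ⟨h1, h2⟩ := hx₀
  -- step 1: congruence on Ioi 0
  have hcongr : ∀ᶠ ε : ℝ in nhdsWithin 0 (Set.Ioi 0),
      rtaResolvent k c ((x₀ : ℂ) + Complex.I * (ε : ℂ) - Complex.I * (c : ℂ)) -
          rtaResolvent k c ((x₀ : ℂ) - Complex.I * (ε : ℂ) - Complex.I * (c : ℂ)) =
      ((Complex.log ((x₀:ℂ) + Complex.I * ε + k) - Complex.log ((x₀:ℂ) + Complex.I * ε - k)) -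
       (Complex.log ((x₀:ℂ) - Complex.I * ε + k) - Complex.log ((x₀:ℂ) - Complex.I * ε - k))) / k := by
    filter_upwards [self_mem_nhdsWithin] with ε (hε : 0 < ε)
    rw [rta_shift k c ((x₀:ℂ) + Complex.I * ε), rta_shift k c ((x₀:ℂ) - Complex.I * ε)]
    rw [rta_eval k hk _ (by simpa using hε.ne'), rta_eval k hk _ (by simpa using hε.ne')]
    ring
  have hre : ((x₀:ℂ) - k).re < 0 := by simp; linarith
  have him : ((x₀:ℂ) - k).im = 0 := by simp
  have hmem : ((x₀:ℂ) + k) ∈ Complex.slitPlane := by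
    left; simp; linarith
  have hmap1 : Tendsto (fun ε : ℝ => (x₀:ℂ) + Complex.I * ε + k) (nhdsWithin 0 (Set.Ioi 0))
      (nhds ((x₀:ℂ) + k)) := by
    have hc : Continuous fun ε : ℝ => (x₀:ℂ) + Complex.I * ε + k := by fun_prop
    have := (hc.tendsto 0).mono_left (nhdsWithin_le_nhds (s := Set.Ioi (0:ℝ)))
    simpa using this
  have hmap3 : Tendsto (fun ε : ℝ => (x₀:ℂ) - Complex.I * ε + k) (nhdsWithin 0 (Set.Ioi 0))
      (nhds ((x₀:ℂ) + k)) := by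
    have hc : Continuous fun ε : ℝ => (x₀:ℂ) - Complex.I * ε + k := by fun_prop
    have := (hc.tendsto 0).mono_left (nhdsWithin_le_nhds (s := Set.Ioi (0:ℝ)))
    simpa using this
  have hL1 : Tendsto (fun ε : ℝ => Complex.log ((x₀:ℂ) + Complex.I * ε + k))
      (nhdsWithin 0 (Set.Ioi 0)) (nhds (Complex.log ((x₀:ℂ) + k))) :=
    (continuousAt_clog hmem).tendsto.comp hmap1
  have hL3 : Tendsto (fun ε : ℝ => Complex.log ((x₀:ℂ) - Complex.I * ε + k))
      (nhdsWithin 0 (Set.Ioi 0)) (nhds (Complex.log ((x₀:ℂ) + k))) :=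
    (continuousAt_clog hmem).tendsto.comp hmap3
  have hL2 : Tendsto (fun ε : ℝ => Complex.log ((x₀:ℂ) + Complex.I * ε - k))
      (nhdsWithin 0 (Set.Ioi 0))
      (nhds (Real.log (‖(x₀:ℂ) - k‖) + Real.pi * Complex.I)) := by
    apply (Complex.tendsto_log_nhdsWithin_im_nonneg_of_re_neg_of_im_zero hre him).comp
    rw [tendsto_nhdsWithin_iff]
    constructor
    · have hc : Continuous fun ε : ℝ => (x₀:ℂ) + Complex.I * ε - k := by fun_prop
      have := (hc.tendsto 0).mono_left (nhdsWithin_le_nhds (s := Set.Ioi (0:ℝ)))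
      simpa using this
    · filter_upwards [self_mem_nhdsWithin] with ε (hε : 0 < ε)
      simp [hε.le]
  have hL4 : Tendsto (fun ε : ℝ => Complex.log ((x₀:ℂ) - Complex.I * ε - k))
      (nhdsWithin 0 (Set.Ioi 0))
      (nhds (Real.log (‖(x₀:ℂ) - k‖) - Real.pi * Complex.I)) := by
    apply (Complex.tendsto_log_nhdsWithin_im_neg_of_re_neg_of_im_zero hre him).comp
    rw [tendsto_nhdsWithin_iff]
    constructor
    · have hc : Continuous fun ε : ℝ => (x₀:ℂ) - Complex.I * ε - k := by fun_prop
      have := (hc.tendsto 0).mono_left (nhdsWithin_le_nhds (s := Set.Ioi (0:ℝ)))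
      simpa using this
    · filter_upwards [self_mem_nhdsWithin] with ε (hε : 0 < ε)
      simp [hε]
  have hlim := ((hL1.sub hL2).sub (hL3.sub hL4)).div_const (k:ℂ)
  have hval : (Complex.log ((x₀:ℂ) + k) - ((Real.log (‖(x₀:ℂ) - k‖) : ℂ) + Real.pi * Complex.I) -
      (Complex.log ((x₀:ℂ) + k) - ((Real.log (‖(x₀:ℂ) - k‖) : ℂ) - Real.pi * Complex.I))) / (k:ℂ) =
      -2 * Real.pi * Complex.I / (k:ℂ) := by
    ring
  rw [hval] at hlim
  exact hlim.congr' (Filter.EventuallyEq.symm hcongr)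
end

section
/- Let H be a real Hilbert space and A : H → H a continuous linear map that is self-adjoint and satisfies ⟪A x, x⟫ ≥ 0 for all x. Let K = ker A, let P denote the orthogonal projection of H onto K, and suppose there is γ > 0 with ⟪A y, y⟫ ≥ γ‖y‖² for every y in the orthogonal complement of K (a spectral gap above the collision invariants). Then for every x ∈ H and every t ≥ 0, ‖exp(−t·A) x − P x‖ ≤ e^{−γt} · ‖x − P x‖; i.e., the solution χ(t) = exp(−t·A) χ(0) of the homogeneous linearized kinetic equation converges exponentially, at rate γ, to its collision-invariant component P χ(0). -/
open RealInnerProductSpace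

section Aux

variable {H : Type*} [NormedAddCommGroup H] [InnerProductSpace ℝ H] [CompleteSpace H]

set_option maxHeartbeats 1000000 in
private lemma exp_apply_hasSum (B : H →L[ℝ] H) (v : H) :
    HasSum (fun n : ℕ => (((n.factorial : ℝ))⁻¹ • B ^ n) v) (NormedSpace.exp B v) :=
  (NormedSpace.exp_series_hasSum_exp' (𝕂 := ℝ) B).mapL (ContinuousLinearMap.apply ℝ H v)

private lemma exp_apply_eq_of_apply_eq_zero (B : H →L[ℝ] H) (v : H) (h : B v = 0) :
    NormedSpace.exp B v = v := by
  have hs2 := exp_apply_hasSum B v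
  have hs3 : HasSum (fun n : ℕ => (((n.factorial : ℝ))⁻¹ • B ^ n) v) v := by
    have h0 : (((Nat.factorial 0 : ℝ))⁻¹ • B ^ 0) v = v := by simp
    have := hasSum_single (f := fun n : ℕ => (((n.factorial : ℝ))⁻¹ • B ^ n) v) 0 ?_
    · rwa [h0] at this
    · intro n hn
      obtain ⟨m, rfl⟩ := Nat.exists_eq_succ_of_ne_zero hn
      have : (B ^ (m + 1)) v = 0 := by
        rw [pow_succ, ContinuousLinearMap.mul_apply, h, map_zero]
      simp [this]
  exact hs2.unique hs3

private lemma exp_mem_of_invariant (B : H →L[ℝ] H) (S : Submodule ℝ H)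
    (hS : IsClosed (S : Set H)) (hB : ∀ x ∈ S, B x ∈ S) (v : H) (hv : v ∈ S) :
    NormedSpace.exp B v ∈ S := by
  have hs := exp_apply_hasSum B v
  have hpow : ∀ n : ℕ, (B ^ n) v ∈ S := by
    intro n
    induction n with
    | zero => simpa using hv
    | succ m ih => rw [pow_succ']; exact hB _ ih
  have hterm : ∀ n : ℕ, (((n.factorial : ℝ))⁻¹ • B ^ n) v ∈ S := fun n => by
    simpa using S.smul_mem ((n.factorial : ℝ))⁻¹ (hpow n)
  exact hS.mem_of_tendsto hs.tendsto_sum_nat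
    (Filter.Eventually.of_forall fun s => S.sum_mem fun i _ => hterm i)

end Aux

/-- if a self-adjoint, positive-semidefinite continuous operator `A` on a
real Hilbert space has a spectral gap `γ > 0` above its kernel (the collision
invariants), then `exp(−tA)x` converges exponentially at rate `γ` to the orthogonal
projection `Px` of `x` onto the kernel. -/
theorem exp_converges_to_kernel_projection {H : Type*} [NormedAddCommGroup H]
    [InnerProductSpace ℝ H] [CompleteSpace H]
    (A : H →L[ℝ] H) (hA : IsSelfAdjoint A)
    (hpos : ∀ x : H, 0 ≤ ⟪A x, x⟫)
    (P : H →L[ℝ] H)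
    (hPmem : ∀ x : H, P x ∈ LinearMap.ker (A : H →ₗ[ℝ] H))
    (hPorth : ∀ x : H, x - P x ∈ (LinearMap.ker (A : H →ₗ[ℝ] H) : Submodule ℝ H)ᗮ)
    (γ : ℝ) (hγpos : 0 < γ)
    (hgap : ∀ y ∈ (LinearMap.ker (A : H →ₗ[ℝ] H) : Submodule ℝ H)ᗮ, γ * ‖y‖ ^ 2 ≤ ⟪A y, y⟫) :
    ∀ x : H, ∀ t : ℝ, 0 ≤ t →
      ‖(NormedSpace.exp (-(t • A))) x - P x‖ ≤ Real.exp (-γ * t) * ‖x - P x‖ := by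
  intro x t ht
  set K : Submodule ℝ H := LinearMap.ker (A : H →ₗ[ℝ] H) with hK
  have hsym : ∀ u v : H, ⟪A u, v⟫ = ⟪u, A v⟫ := fun u v => hA.isSymmetric u v
  -- A maps Kᗮ into Kᗮ
  have hAinv : ∀ u ∈ Kᗮ, A u ∈ Kᗮ := by
    intro u hu
    rw [Submodule.mem_orthogonal]
    intro k hk
    have hk0 : A k = 0 := hk
    rw [← hsym k u, hk0, inner_zero_left]
  set x0 : H := x - P x with hx0
  have hx0mem : x0 ∈ Kᗮ := hPorth x
  -- the trajectory
  set y : ℝ → H := fun s => NormedSpace.exp (-(s • A)) x0 with hy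
  have hymem : ∀ s : ℝ, y s ∈ Kᗮ := by
    intro s
    refine exp_mem_of_invariant (-(s • A)) Kᗮ K.isClosed_orthogonal ?_ x0 hx0mem
    intro u hu
    have : (-(s • A)) u = -(s • A u) := by simp
    rw [this]
    exact Kᗮ.neg_mem (Kᗮ.smul_mem s (hAinv u hu))
  -- derivative of y
  have hyderiv : ∀ s : ℝ, HasDerivAt y (-(A (y s))) s := by
    intro s
    have hD : HasDerivAt (fun u : ℝ => NormedSpace.exp (u • (-A)))
        ((-A) * NormedSpace.exp (s • (-A))) s :=
      hasDerivAt_exp_smul_const' (-A) s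
    have h2 := (ContinuousLinearMap.apply ℝ H x0).hasFDerivAt.comp_hasDerivAt s hD
    simpa [Function.comp_def, smul_neg, ContinuousLinearMap.mul_apply] using h2
  -- scalar function g
  set g : ℝ → ℝ := fun s => Real.exp (2 * γ * s) * ⟪y s, y s⟫ with hg
  have h1 : ∀ s : ℝ, HasDerivAt (fun u : ℝ => Real.exp (2 * γ * u))
      (Real.exp (2 * γ * s) * (2 * γ)) s := by
    intro s
    simpa only [id_eq, mul_one] using ((hasDerivAt_id s).const_mul (2 * γ)).exp
  have hinner : ∀ s : ℝ, HasDerivAt (fun u : ℝ => ⟪y u, y u⟫)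
      (⟪y s, -(A (y s))⟫ + ⟪-(A (y s)), y s⟫) s := fun s =>
    (hyderiv s).inner ℝ (hyderiv s)
  have hgderiv : ∀ s : ℝ, HasDerivAt g
      (Real.exp (2 * γ * s) * (2 * γ) * ⟪y s, y s⟫ +
        Real.exp (2 * γ * s) * (⟪y s, -(A (y s))⟫ + ⟪-(A (y s)), y s⟫)) s := fun s =>
    (h1 s).mul (hinner s)
  have hgd : ∀ s : ℝ, deriv g s ≤ 0 := by
    intro s
    rw [(hgderiv s).deriv]
    have hgap' := hgap (y s) (hymem s)
    have hn : ⟪y s, y s⟫ = ‖y s‖ ^ 2 := real_inner_self_eq_norm_sq (y s)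
    have he : (0:ℝ) < Real.exp (2 * γ * s) := Real.exp_pos _
    have hsum : ⟪y s, -(A (y s))⟫ + ⟪-(A (y s)), y s⟫ = -(2 * ⟪A (y s), y s⟫) := by
      rw [inner_neg_right, inner_neg_left, real_inner_comm (y s) (A (y s))]
      ring
    rw [hsum, hn]
    nlinarith
  have hgdiff : Differentiable ℝ g := fun s => (hgderiv s).differentiableAt
  have hanti : Antitone g := antitone_of_deriv_nonpos hgdiff hgd
  have hle : g t ≤ g 0 := hanti ht
  have hg0 : g 0 = ‖x0‖ ^ 2 := by
    simp only [hg, hy]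
    rw [zero_smul, neg_zero, NormedSpace.exp_zero]
    simp [real_inner_self_eq_norm_sq]
  have hyt : ‖y t‖ ^ 2 ≤ (Real.exp (-γ * t) * ‖x0‖) ^ 2 := by
    have hmain : Real.exp (2 * γ * t) * ‖y t‖ ^ 2 ≤ ‖x0‖ ^ 2 := by
      rw [← hg0]
      have hgt : g t = Real.exp (2 * γ * t) * ‖y t‖ ^ 2 := by
        simp only [hg, real_inner_self_eq_norm_sq]
      rw [← hgt]; exact hle
    have he : (0:ℝ) < Real.exp (2 * γ * t) := Real.exp_pos _
    have hexp : (Real.exp (-γ * t)) ^ 2 = (Real.exp (2 * γ * t))⁻¹ := by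
      rw [← Real.exp_nat_mul, ← Real.exp_neg]
      norm_num
      ring_nf
    rw [mul_pow, hexp, inv_mul_eq_div, le_div_iff₀ he]
    linarith [hmain]
  have hfinal : ‖y t‖ ≤ Real.exp (-γ * t) * ‖x0‖ := by
    have h1 : 0 ≤ Real.exp (-γ * t) * ‖x0‖ := by positivity
    nlinarith [norm_nonneg (y t)]
  -- identify exp(-(t•A)) x - P x with y t
  have hPx : NormedSpace.exp (-(t • A)) (P x) = P x := by
    apply exp_apply_eq_of_apply_eq_zero
    have : A (P x) = 0 := hPmem x
    simp [this]
  have hid : NormedSpace.exp (-(t • A)) x - P x = y t := by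
    show _ = NormedSpace.exp (-(t • A)) x0
    rw [hx0, map_sub, hPx]
  rw [hid]
  exact hfinal
end
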